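/- arXiv:1411.3092 — 7 statements merged into one kernel-verified Lean document; each statement's English description precedes it below -/
import Mathlib

section
/- Let φ : 𝒪_n → 𝒪_n be a ℂ-algebra homomorphism with φ(𝔪) ⊆ 𝔪. Then there exist an open neighbourhood U' of 0 in ℂⁿ and a holomorphic map g : U' → ℂⁿ with g(0) = 0 such that for every germ f ∈ 𝒪_n, φ(f) is the germ at 0 of the composite F ∘ g, where F is any holomorphic representative of f on a neighbourhood of 0 (the composite germ being independent of the choices). Moreover g can be taken to be any holomorphic map whose component germs at 0 are φ(z_1), …, φ(z_n). -/
open Filter Topology Set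

noncomputable section

/-- `ℂⁿ`. -/
abbrev Cn (n : ℕ) : Type := EuclideanSpace ℂ (Fin n)

namespace Filter.Germ

/-- The value at `x` of a germ at the neighbourhood filter of `x`. -/
def valueAt {α β : Type*} [TopologicalSpace α] {x : α} (g : Germ (𝓝 x) β) : β :=
  g.liftOn (fun f => f x) fun _ _ h => h.eq_of_nhds

@[simp] lemma valueAt_coe {α β : Type*} [TopologicalSpace α] {x : α} (f : α → β) :
    (↑f : Germ (𝓝 x) β).valueAt = f x := rfl

end Filter.Germ

/-- The `ℂ`-algebra structure on germs of `ℂ`-valued functions,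
given by the constant functions. -/
instance germAlgebra {α : Type*} (l : Filter α) : Algebra ℂ (Germ l ℂ) :=
  ((Filter.Germ.coeRingHom l).comp (Pi.constRingHom α ℂ)).toAlgebra

/-- `𝒪ₙ`: the ring of germs at the origin of `ℂⁿ` of holomorphic functions, realized as the
subalgebra of the ring of germs at `𝓝 0` of `ℂ`-valued functions consisting of germs having a
representative that is complex-analytic on a neighbourhood of `0`. -/
def HoloGerm (n : ℕ) : Subalgebra ℂ (Germ (𝓝 (0 : Cn n)) ℂ) where
  carrier := {g | ∃ F : Cn n → ℂ, AnalyticAt ℂ F 0 ∧ (↑F : Germ (𝓝 (0 : Cn n)) ℂ) = g}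
  mul_mem' := by
    rintro a b ⟨F, hF, rfl⟩ ⟨G, hG, rfl⟩
    exact ⟨F * G, hF.mul hG, by rw [← Filter.Germ.coe_mul]⟩
  add_mem' := by
    rintro a b ⟨F, hF, rfl⟩ ⟨G, hG, rfl⟩
    exact ⟨F + G, hF.add hG, by rw [← Filter.Germ.coe_add]⟩
  algebraMap_mem' := fun c => ⟨fun _ => c, analyticAt_const, rfl⟩

lemma valueAt_add {n : ℕ} (a b : Germ (𝓝 (0 : Cn n)) ℂ) :
    (a + b).valueAt = a.valueAt + b.valueAt := by
  induction a using Filter.Germ.inductionOn with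
  | h f => induction b using Filter.Germ.inductionOn with
    | h g => rfl

lemma valueAt_mul {n : ℕ} (a b : Germ (𝓝 (0 : Cn n)) ℂ) :
    (a * b).valueAt = a.valueAt * b.valueAt := by
  induction a using Filter.Germ.inductionOn with
  | h f => induction b using Filter.Germ.inductionOn with
    | h g => rfl

set_option synthInstance.maxHeartbeats 1000000 in
/-- The maximal ideal `𝔪 ⊆ 𝒪ₙ` of germs vanishing at the origin. -/
def mIdeal (n : ℕ) : Ideal (HoloGerm n) where
  carrier := {g | (g : Germ (𝓝 (0 : Cn n)) ℂ).valueAt = 0}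
  add_mem' := by
    intro a b ha hb
    show ((a + b : HoloGerm n) : Germ (𝓝 (0 : Cn n)) ℂ).valueAt = 0
    rw [Subalgebra.coe_add, valueAt_add, ha, hb, add_zero]
  zero_mem' := by
    show ((0 : HoloGerm n) : Germ (𝓝 (0 : Cn n)) ℂ).valueAt = 0
    rw [Subalgebra.coe_zero]
    rfl
  smul_mem' := by
    intro c x hx
    have hx' : ((x : Germ (𝓝 (0 : Cn n)) ℂ)).valueAt = 0 := hx
    show (((c * x : HoloGerm n) : Germ (𝓝 (0 : Cn n)) ℂ)).valueAt = 0
    rw [Subalgebra.coe_mul, valueAt_mul, hx', mul_zero]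

/-- The germ `zₐ ∈ 𝒪ₙ` of the `a`-th coordinate function. -/
def coordGerm (n : ℕ) (a : Fin n) : HoloGerm n :=
  ⟨(↑(fun z : Cn n => z a) : Germ (𝓝 (0 : Cn n)) ℂ),
    ⟨fun z : Cn n => z a, (EuclideanSpace.proj (𝕜 := ℂ) a).analyticAt 0, rfl⟩⟩

/-!
Both `φ` and `f ↦ f ∘ g` are `ℂ`-algebra homomorphisms from `𝒪ₙ` to germs that agree on the
coordinate germs, hence on polynomials in them. By Hadamard's lemma `f - f(0)` lies in the ideal
`I = (z₁, …, zₙ)`, so every germ is a polynomial modulo `Iᵏ` for every `k`. Both homomorphisms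
send `Iᵏ` to germs that are `O(‖z‖ᵏ)`, because they send each `zₐ` to a germ vanishing at `0`.
Hence `φ(f) - f ∘ g` is an analytic germ that is `O(‖z‖ᵏ)` for every `k`; all its Taylor
coefficients vanish, so it is zero.
-/

open Asymptotics

section Analytic

variable {𝕜 E F : Type*} [NontriviallyNormedField 𝕜] [NormedAddCommGroup E] [NormedSpace 𝕜 E]
  [NormedAddCommGroup F] [NormedSpace 𝕜 F]

theorem AnalyticAt.exists_analyticAt_eventually_sub_eq_apply [CompleteSpace F] {f : E → F}
    {x : E} (hf : AnalyticAt 𝕜 f x) :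
    ∃ A : E → E →L[𝕜] F, AnalyticAt 𝕜 A x ∧ ∀ᶠ z in 𝓝 x, f z - f x = A z (z - x) := by
  obtain ⟨p, r, hp⟩ := hf
  have hshift : 0 < p.shift.radius := p.radius_shift ▸ hp.r_pos.trans_le hp.r_le
  refine ⟨fun z => p.shift.sum (z - x),
    (p.shift.hasFPowerSeriesOnBall hshift).analyticAt.comp_of_eq
      (analyticAt_id.sub analyticAt_const) (sub_self x), ?_⟩
  filter_upwards [Metric.eball_mem_nhds x (lt_min hp.r_pos hshift)] with z hz
  have hz' : z - x ∈ Metric.eball (0 : E) (min r p.shift.radius) := by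
    rwa [mem_eball_zero_iff, ← edist_eq_enorm_sub, ← Metric.mem_eball]
  have hsum := hp.hasSum (Metric.eball_subset_eball (min_le_left _ _) hz')
  have hsum_shift := (p.shift.hasSum (Metric.eball_subset_eball (min_le_right _ _) hz')).mapL
    (ContinuousLinearMap.apply 𝕜 F (z - x))
  have hterm : ∀ m, p.shift m (fun _ => z - x) (z - x) = p (m + 1) fun _ => z - x := by
    intro m
    simp only [FormalMultilinearSeries.shift, ContinuousMultilinearMap.curryRight_apply]
    congr 1
    funext i
    induction i using Fin.lastCases <;> simp
  simp only [ContinuousLinearMap.apply_apply, hterm] at hsum_shift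
  rw [← hasSum_nat_add_iff' 1] at hsum
  simpa [hp.coeff_zero, add_sub_cancel] using hsum.unique hsum_shift

theorem AnalyticAt.eventuallyEq_zero_of_forall_isBigO {f : E → F} {x : E}
    (hf : AnalyticAt 𝕜 f x) (h : ∀ k : ℕ, f =O[𝓝 x] fun z => ‖z - x‖ ^ k) :
    f =ᶠ[𝓝 x] 0 := by
  obtain ⟨p, r, hp⟩ := hf
  have hterm : ∀ m y, (p m fun _ => y) = 0 := by
    intro m
    induction m using Nat.strong_induction_on with
    | _ m ih =>
      have hpartial : p.partialSum (m + 1) = fun y => p m fun _ => y := by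
        funext y
        rw [FormalMultilinearSeries.partialSum, Finset.sum_range_succ,
          Finset.sum_eq_zero fun j hj => ih j (Finset.mem_range.1 hj) y, zero_add]
      have htendsto : Tendsto (x + ·) (𝓝 (0 : E)) (𝓝 x) := by
        simpa using (continuous_const_add x).tendsto 0
      have hshifted : (fun y => f (x + y)) =O[𝓝 0] fun y => ‖y‖ ^ (m + 1) := by
        simpa [Function.comp_def] using (h (m + 1)).comp_tendsto htendsto
      refine IsBigO.continuousMultilinearMap_apply_eq_zero ?_
      refine (hshifted.sub (hp.hasFPowerSeriesAt.isBigO_sub_partialSum_pow (m + 1))).congr_left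
        fun y => ?_
      rw [hpartial, sub_sub_cancel]
  filter_upwards [Metric.eball_mem_nhds x hp.r_pos] with z hz
  have hz' : z - x ∈ Metric.eball (0 : E) r := by
    rwa [mem_eball_zero_iff, ← edist_eq_enorm_sub, ← Metric.mem_eball]
  simpa using (hp.hasSum hz').unique (by simp only [hterm]; exact hasSum_zero)

end Analytic

section BigONormPow

variable {𝕜 E : Type*} [NormedField 𝕜] [NormedAddCommGroup E]

def bigONormPow (k : ℕ) : AddSubgroup (Germ (𝓝 (0 : E)) 𝕜) where
  carrier := {d | ∃ Δ : E → 𝕜, ↑Δ = d ∧ Δ =O[𝓝 0] fun z => ‖z‖ ^ k}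
  zero_mem' := ⟨0, rfl, isBigO_zero _ _⟩
  add_mem' := by
    rintro _ _ ⟨Δ₁, rfl, h₁⟩ ⟨Δ₂, rfl, h₂⟩
    exact ⟨Δ₁ + Δ₂, rfl, h₁.add h₂⟩
  neg_mem' := by
    rintro _ ⟨Δ, rfl, h⟩
    exact ⟨-Δ, rfl, h.neg_left⟩

theorem mul_mem_bigONormPow {j k : ℕ} {d₁ d₂ : Germ (𝓝 (0 : E)) 𝕜} (h₁ : d₁ ∈ bigONormPow j)
    (h₂ : d₂ ∈ bigONormPow k) : d₁ * d₂ ∈ bigONormPow (j + k) := by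
  obtain ⟨Δ₁, rfl, O₁⟩ := h₁
  obtain ⟨Δ₂, rfl, O₂⟩ := h₂
  refine ⟨Δ₁ * Δ₂, rfl, ?_⟩
  simp_rw [pow_add]
  exact O₁.mul O₂

theorem ContinuousAt.coe_mem_bigONormPow_zero {G : E → 𝕜} (hG : ContinuousAt G 0) :
    (G : Germ (𝓝 (0 : E)) 𝕜) ∈ bigONormPow 0 :=
  ⟨G, rfl, by simpa only [pow_zero] using hG.isBigO_one ℝ⟩

theorem map_mem_bigONormPow_of_mem_span_pow {R ι : Type*} [CommRing R] [Fintype ι]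
    (Θ : R →+* Germ (𝓝 (0 : E)) 𝕜) {v : ι → R} (h₀ : ∀ r, Θ r ∈ bigONormPow 0)
    (h₁ : ∀ i, Θ (v i) ∈ bigONormPow 1) {k : ℕ} {m : R}
    (hm : m ∈ Ideal.span (range v) ^ k) : Θ m ∈ bigONormPow k := by
  induction k generalizing m with
  | zero => exact h₀ m
  | succ k ih =>
    rw [pow_succ] at hm
    refine Submodule.mul_induction_on hm (fun y hy x hx => ?_) fun _ _ hx hy => ?_
    · obtain ⟨c, rfl⟩ := Ideal.mem_span_range_iff_exists_fun.1 hx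
      simp only [Finset.mul_sum, ← mul_assoc, map_sum, map_mul]
      exact sum_mem fun i _ =>
        mul_mem_bigONormPow (by simpa using ih (Ideal.mul_mem_right (c i) _ hy)) (h₁ i)
    · rw [map_add]
      exact add_mem hx hy

end BigONormPow

section

variable {𝕜 E : Type*} [NontriviallyNormedField 𝕜] [NormedAddCommGroup E] [NormedSpace 𝕜 E]

theorem DifferentiableAt.coe_mem_bigONormPow_one {G : E → 𝕜} (hG : DifferentiableAt 𝕜 G 0)
    (hG₀ : G 0 = 0) : (G : Germ (𝓝 (0 : E)) 𝕜) ∈ bigONormPow 1 :=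
  ⟨G, rfl, by simpa [hG₀] using hG.hasFDerivAt.isBigO_sub.norm_right⟩

theorem AnalyticAt.coe_eq_zero_of_forall_mem_bigONormPow {G : E → 𝕜} (hG : AnalyticAt 𝕜 G 0)
    (h : ∀ k, (G : Germ (𝓝 (0 : E)) 𝕜) ∈ bigONormPow k) : (G : Germ (𝓝 (0 : E)) 𝕜) = 0 := by
  refine Germ.coe_eq.2 (hG.eventuallyEq_zero_of_forall_isBigO fun k => ?_)
  obtain ⟨Δ, hΔ, hO⟩ := h k
  simpa using (Germ.coe_eq.1 hΔ).symm.trans_isBigO hO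

end

theorem exists_mem_adjoin_sub_mem_span_pow {K R ι : Type*} [CommRing K] [CommRing R]
    [Algebra K R] [Fintype ι] {v : ι → R}
    (hv : ∀ r : R, ∃ c : K, r - algebraMap K R c ∈ Ideal.span (range v)) (k : ℕ) (r : R) :
    ∃ p ∈ Algebra.adjoin K (range v), r - p ∈ Ideal.span (range v) ^ k := by
  induction k generalizing r with
  | zero => exact ⟨0, zero_mem _, by simp⟩
  | succ k ih =>
    obtain ⟨c, hc⟩ := hv r
    obtain ⟨w, hw⟩ := Ideal.mem_span_range_iff_exists_fun.1 hc
    choose p hp hwp using fun i => ih (w i)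
    refine ⟨algebraMap K R c + ∑ i, p i * v i, add_mem (algebraMap_mem _ c)
      (sum_mem fun i _ => mul_mem (hp i) (Algebra.subset_adjoin ⟨i, rfl⟩)), ?_⟩
    have hsplit : r - (algebraMap K R c + ∑ i, p i * v i) = ∑ i, (w i - p i) * v i := by
      simp only [sub_mul, Finset.sum_sub_distrib, hw]
      ring
    rw [hsplit, pow_succ]
    exact sum_mem fun i _ => Ideal.mul_mem_mul (hwp i) (Ideal.subset_span ⟨i, rfl⟩)

theorem sub_mem_bigONormPow_of_eqOn_generators {𝕜 E K R ι : Type*} [NormedField 𝕜]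
    [NormedAddCommGroup E] [CommRing K] [CommRing R] [Algebra K R]
    [Algebra K (Germ (𝓝 (0 : E)) 𝕜)] [Fintype ι] {v : ι → R}
    (hv : ∀ r : R, ∃ c : K, r - algebraMap K R c ∈ Ideal.span (range v))
    (Θ₁ Θ₂ : R →ₐ[K] Germ (𝓝 (0 : E)) 𝕜) (hΘ : ∀ i, Θ₁ (v i) = Θ₂ (v i))
    (hΘ₁ : ∀ r, Θ₁ r ∈ bigONormPow 0) (hΘ₂ : ∀ r, Θ₂ r ∈ bigONormPow 0)
    (hv₁ : ∀ i, Θ₁ (v i) ∈ bigONormPow 1) (k : ℕ) (r : R) :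
    Θ₁ r - Θ₂ r ∈ bigONormPow k := by
  obtain ⟨p, hp, hrp⟩ := exists_mem_adjoin_sub_mem_span_pow hv k r
  have hΘp : Θ₁ p = Θ₂ p := AlgHom.eqOn_adjoin_iff.2 (range_subset_iff.2 hΘ) hp
  have hsplit : Θ₁ r - Θ₂ r = Θ₁ (r - p) - Θ₂ (r - p) := by
    rw [map_sub, map_sub, hΘp, sub_sub_sub_cancel_right]
  rw [hsplit]
  exact sub_mem (map_mem_bigONormPow_of_mem_span_pow Θ₁.toRingHom hΘ₁ hv₁ hrp)
    (map_mem_bigONormPow_of_mem_span_pow Θ₂.toRingHom hΘ₂ (fun i => hΘ i ▸ hv₁ i) hrp)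

theorem Filter.Germ.coe_finsetSum {ι α M : Type*} [AddCommMonoid M] {l : Filter α}
    (s : Finset ι) (f : ι → α → M) : ((∑ i ∈ s, f i : α → M) : Germ l M) = ∑ i ∈ s, ↑(f i) :=
  map_sum (Germ.coeAddHom l) f s

def Filter.Germ.compTendstoAlgHom {α β : Type*} {la : Filter α} {lb : Filter β} (g : β → α)
    (hg : Tendsto g lb la) : Germ la ℂ →ₐ[ℂ] Germ lb ℂ where
  toFun d := d.compTendsto g hg
  map_one' := rfl
  map_mul' a b := Germ.inductionOn₂ a b fun _ _ => rfl
  map_zero' := rfl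
  map_add' a b := Germ.inductionOn₂ a b fun _ _ => rfl
  commutes' _ := rfl

namespace HoloGerm

variable {n : ℕ}

theorem exists_sub_algebraMap_mem_span_coordGerm (γ : HoloGerm n) :
    ∃ c : ℂ, γ - algebraMap ℂ (HoloGerm n) c ∈ Ideal.span (range (coordGerm n)) := by
  obtain ⟨F, hF, hFγ⟩ := γ.2
  obtain ⟨A, hA, hFA⟩ := hF.exists_analyticAt_eventually_sub_eq_apply
  set e := EuclideanSpace.basisFun (Fin n) ℂ
  have hAe : ∀ a, AnalyticAt ℂ (fun z => A z (e a)) 0 :=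
    fun a => (ContinuousLinearMap.apply ℂ ℂ (e a)).analyticAt _ |>.comp hA
  refine ⟨F 0, Ideal.mem_span_range_iff_exists_fun.2
    ⟨fun a => ⟨_, fun z => A z (e a), hAe a, rfl⟩, Subtype.ext ?_⟩⟩
  have hsum : ∀ z : Cn n, A z z = ∑ a, A z (e a) * z a := by
    intro z
    rw [← congrArg (A z) (e.sum_repr z)]
    simp [e, mul_comm]
  simp only [AddSubmonoidClass.coe_finsetSum, Subalgebra.coe_mul, Subalgebra.coe_sub,
    Subalgebra.coe_algebraMap, ← hFγ]
  change ∑ a, ((fun z => A z (e a) * z a : Cn n → ℂ) : Germ (𝓝 (0 : Cn n)) ℂ) =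
    ↑(fun z => F z - F 0)
  rw [← Germ.coe_finsetSum, Germ.coe_eq]
  filter_upwards [hFA] with z hz
  rw [Finset.sum_apply, hz, sub_zero, hsum]

theorem coe_algHom_apply_eq_coe_comp (φ : HoloGerm n →ₐ[ℂ] HoloGerm n) {g : Cn n → Cn n}
    (hg : AnalyticAt ℂ g 0) (hg₀ : g 0 = 0)
    (hφg : ∀ a, (↑(fun x => g x a) : Germ (𝓝 (0 : Cn n)) ℂ) = ↑(φ (coordGerm n a)))
    {f : HoloGerm n} {F : Cn n → ℂ} (hF : AnalyticAt ℂ F 0)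
    (hFf : (↑F : Germ (𝓝 (0 : Cn n)) ℂ) = ↑f) :
    (↑(φ f) : Germ (𝓝 (0 : Cn n)) ℂ) = ↑(F ∘ g) := by
  have hg_tendsto : Tendsto g (𝓝 0) (𝓝 0) := by simpa [hg₀] using hg.continuousAt.tendsto
  set Θ₁ := (HoloGerm n).val.comp φ
  set Θ₂ := (Germ.compTendstoAlgHom g hg_tendsto).comp (HoloGerm n).val
  have hΘ₂_apply : ∀ {γ : HoloGerm n} {G : Cn n → ℂ}, (↑G : Germ (𝓝 (0 : Cn n)) ℂ) = ↑γ →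
      Θ₂ γ = ↑(G ∘ g) := by
    rintro γ G hG
    simp only [Θ₂, AlgHom.comp_apply, Subalgebra.coe_val, ← hG]
    rfl
  have hΘ : ∀ a, Θ₁ (coordGerm n a) = Θ₂ (coordGerm n a) := fun a =>
    (hφg a).symm.trans (hΘ₂_apply (G := fun z => z a) rfl).symm
  have hΘ₁_bdd : ∀ γ, Θ₁ γ ∈ bigONormPow 0 := fun γ => by
    obtain ⟨G, hG, hGγ⟩ := (φ γ).2
    simpa [Θ₁, ← hGγ] using hG.continuousAt.coe_mem_bigONormPow_zero
  have hΘ₂_bdd : ∀ γ, Θ₂ γ ∈ bigONormPow 0 := fun γ => by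
    obtain ⟨G, hG, hGγ⟩ := γ.2
    rw [hΘ₂_apply hGγ]
    exact (hG.continuousAt.comp_of_eq hg.continuousAt hg₀).coe_mem_bigONormPow_zero
  have hv₁ : ∀ a, Θ₁ (coordGerm n a) ∈ bigONormPow 1 := fun a => by
    have hga : AnalyticAt ℂ (fun x => g x a) 0 :=
      ((EuclideanSpace.proj (𝕜 := ℂ) a).analyticAt _).comp hg
    simpa [Θ₁, ← hφg a] using hga.differentiableAt.coe_mem_bigONormPow_one (by simp [hg₀])
  obtain ⟨G, hG, hGf⟩ := (φ f).2
  have hdiff : (↑(G - F ∘ g) : Germ (𝓝 (0 : Cn n)) ℂ) = Θ₁ f - Θ₂ f := by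
    rw [Germ.coe_sub, hGf, hΘ₂_apply hFf]
    rfl
  have hzero := (hG.sub (hF.comp_of_eq hg hg₀)).coe_eq_zero_of_forall_mem_bigONormPow fun k =>
    hdiff ▸ sub_mem_bigONormPow_of_eqOn_generators exists_sub_algebraMap_mem_span_coordGerm
      Θ₁ Θ₂ hΘ hΘ₁_bdd hΘ₂_bdd hv₁ k f
  rw [hdiff, sub_eq_zero, hΘ₂_apply hFf] at hzero
  exact hzero

theorem coordGerm_mem_mIdeal (a : Fin n) : coordGerm n a ∈ mIdeal n := rfl

theorem exists_analyticOnNhd_coe_eq (γ : Fin n → HoloGerm n) (hγ : ∀ a, γ a ∈ mIdeal n) :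
    ∃ (U : Set (Cn n)) (g : Cn n → Cn n), IsOpen U ∧ (0 : Cn n) ∈ U ∧
      AnalyticOnNhd ℂ g U ∧ g 0 = 0 ∧
      ∀ a, (↑(fun x => g x a) : Germ (𝓝 (0 : Cn n)) ℂ) = ↑(γ a) := by
  choose G hG hGγ using fun a => (γ a).2
  have hG₀ : ∀ a, G a 0 = 0 := fun a => by
    have hγ₀ : (γ a : Germ (𝓝 (0 : Cn n)) ℂ).valueAt = 0 := hγ a
    rwa [← hGγ a] at hγ₀
  obtain ⟨U, hUG, hU, h0U⟩ :=
    mem_nhds_iff.1 (eventually_all.2 fun a => (hG a).eventually_analyticAt)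
  refine ⟨U, fun x => WithLp.toLp 2 fun a => G a x, hU, h0U, fun x hx => ?_, ?_, hGγ⟩
  · exact ((PiLp.continuousLinearEquiv 2 ℂ _).symm.analyticAt _).comp (AnalyticAt.pi (hUG hx))
  · ext a
    exact hG₀ a

end HoloGerm

theorem algHom_is_composition_general (n : ℕ)
    (φ : HoloGerm n →ₐ[ℂ] HoloGerm n)
    (hφ : ∀ g ∈ mIdeal n, φ g ∈ mIdeal n) :
    (∃ (U' : Set (Cn n)) (g : Cn n → Cn n), IsOpen U' ∧ (0 : Cn n) ∈ U' ∧
      AnalyticOnNhd ℂ g U' ∧ g 0 = 0 ∧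
      (∀ a : Fin n,
        (↑(fun x : Cn n => g x a) : Germ (𝓝 (0 : Cn n)) ℂ) = ↑(φ (coordGerm n a))) ∧
      (∀ f : HoloGerm n, ∀ F : Cn n → ℂ, AnalyticAt ℂ F 0 →
        (↑F : Germ (𝓝 (0 : Cn n)) ℂ) = ↑f →
        (↑(φ f) : Germ (𝓝 (0 : Cn n)) ℂ) = ↑(F ∘ g))) ∧
    (∀ (U'' : Set (Cn n)) (g' : Cn n → Cn n), IsOpen U'' → (0 : Cn n) ∈ U'' →
      AnalyticOnNhd ℂ g' U'' → g' 0 = 0 →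
      (∀ a : Fin n,
        (↑(fun x : Cn n => g' x a) : Germ (𝓝 (0 : Cn n)) ℂ) = ↑(φ (coordGerm n a))) →
      ∀ f : HoloGerm n, ∀ F : Cn n → ℂ, AnalyticAt ℂ F 0 →
        (↑F : Germ (𝓝 (0 : Cn n)) ℂ) = ↑f →
        (↑(φ f) : Germ (𝓝 (0 : Cn n)) ℂ) = ↑(F ∘ g')) := by
  obtain ⟨U, g, hU, h0U, hg, hg₀, hφg⟩ := HoloGerm.exists_analyticOnNhd_coe_eq
    (fun a => φ (coordGerm n a)) fun a => hφ _ (HoloGerm.coordGerm_mem_mIdeal a)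
  refine ⟨⟨U, g, hU, h0U, hg, hg₀, hφg, fun f F hF hFf => ?_⟩,
    fun U' g' _ h0U' hg' hg'₀ hφg' f F hF hFf => ?_⟩
  · exact HoloGerm.coe_algHom_apply_eq_coe_comp φ (hg 0 h0U) hg₀ hφg hF hFf
  · exact HoloGerm.coe_algHom_apply_eq_coe_comp φ (hg' 0 h0U') hg'₀ hφg' hF hFf

/-- Let `φ : 𝒪ₙ → 𝒪ₙ` be a `ℂ`-algebra homomorphism with `φ(𝔪) ⊆ 𝔪`.  Then there are an open
neighbourhood `U'` of `0` in `ℂⁿ` and a holomorphic map `g : U' → ℂⁿ` with `g 0 = 0`, whose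
component germs at `0` are `φ(z₁), …, φ(zₙ)`, such that for every germ `f ∈ 𝒪ₙ` and every
holomorphic representative `F` of `f` near `0`, `φ(f)` is the germ at `0` of `F ∘ g`.
Moreover `g` can be taken to be any holomorphic map whose component germs at `0` are the
`φ(zₐ)`. -/
theorem algHom_is_composition (n : ℕ) (hn : 1 ≤ n)
    (φ : HoloGerm n →ₐ[ℂ] HoloGerm n)
    (hφ : ∀ g ∈ mIdeal n, φ g ∈ mIdeal n) :
    (∃ (U' : Set (Cn n)) (g : Cn n → Cn n), IsOpen U' ∧ (0 : Cn n) ∈ U' ∧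
      AnalyticOnNhd ℂ g U' ∧ g 0 = 0 ∧
      (∀ a : Fin n,
        (↑(fun x : Cn n => g x a) : Germ (𝓝 (0 : Cn n)) ℂ) = ↑(φ (coordGerm n a))) ∧
      (∀ f : HoloGerm n, ∀ F : Cn n → ℂ, AnalyticAt ℂ F 0 →
        (↑F : Germ (𝓝 (0 : Cn n)) ℂ) = ↑f →
        (↑(φ f) : Germ (𝓝 (0 : Cn n)) ℂ) = ↑(F ∘ g))) ∧
    (∀ (U'' : Set (Cn n)) (g' : Cn n → Cn n), IsOpen U'' → (0 : Cn n) ∈ U'' →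
      AnalyticOnNhd ℂ g' U'' → g' 0 = 0 →
      (∀ a : Fin n,
        (↑(fun x : Cn n => g' x a) : Germ (𝓝 (0 : Cn n)) ℂ) = ↑(φ (coordGerm n a))) →
      ∀ f : HoloGerm n, ∀ F : Cn n → ℂ, AnalyticAt ℂ F 0 →
        (↑F : Germ (𝓝 (0 : Cn n)) ℂ) = ↑f →
        (↑(φ f) : Germ (𝓝 (0 : Cn n)) ℂ) = ↑(F ∘ g')) :=
  algHom_is_composition_general n φ hφ
end
end

section
/- Let φ : 𝒪_n → 𝒪_n be a ℂ-algebra isomorphism with φ(𝔪) ⊆ 𝔪, and let g : U' → ℂⁿ be a holomorphic map on an open neighbourhood U' of 0 with g(0) = 0 whose component germs at 0 are φ(z_1), …, φ(z_n), so that φ(f) = f ∘ g as germs at 0 for all f ∈ 𝒪_n. Then the derivative of g at 0 is an invertible linear map; consequently, after shrinking U', the map g is a biholomorphism from U' onto an open neighbourhood of 0 in ℂⁿ. -/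
open Filter Topology Set

noncomputable section

/-! Since `φ` is surjective and acts as pullback by `g`, each coordinate germ is `Hₐ ∘ g` for
some `Hₐ` analytic at `0`. Then `H = (Hₐ)ₐ` is an analytic left inverse of `g` near `0`; by the
chain rule `dH₀ ∘ dg₀ = id`, so `dg₀` is injective, hence invertible in finite dimension, and the
inverse function theorem makes `g` a biholomorphism near `0` with inverse `H`. -/

section LocalInverse

variable {𝕜 : Type*} [NontriviallyNormedField 𝕜]
  {E : Type*} [NormedAddCommGroup E] [NormedSpace 𝕜 E]
  {F : Type*} [NormedAddCommGroup F] [NormedSpace 𝕜 F]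

theorem exists_continuousLinearEquiv_eq_fderiv_of_leftInverse [CompleteSpace 𝕜]
    [FiniteDimensional 𝕜 E] {g H : E → E} {x : E} (hg : DifferentiableAt 𝕜 g x)
    (hH : DifferentiableAt 𝕜 H (g x)) (hHg : H ∘ g =ᶠ[𝓝 x] id) :
    ∃ L : E ≃L[𝕜] E, (L : E →L[𝕜] E) = fderiv 𝕜 g x := by
  have hcomp : (fderiv 𝕜 H (g x)).comp (fderiv 𝕜 g x) = ContinuousLinearMap.id 𝕜 E := by
    rw [← fderiv_comp x hH hg, hHg.fderiv_eq, fderiv_id]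
  have hinj : Function.Injective (fderiv 𝕜 g x) :=
    Function.LeftInverse.injective fun v => by
      simpa using ContinuousLinearMap.ext_iff.mp hcomp v
  exact ⟨(LinearEquiv.ofInjectiveEndo _ hinj).toContinuousLinearEquiv, rfl⟩

theorem exists_open_restriction_with_analytic_inverse [CompleteSpace E] {g : E → F} {H : F → E}
    {x : E} {L : E ≃L[𝕜] F} (hg : HasStrictFDerivAt g (L : E →L[𝕜] F) x)
    (hH : AnalyticAt 𝕜 H (g x)) (hHg : H ∘ g =ᶠ[𝓝 x] id) {U : Set E} (hU : U ∈ 𝓝 x) :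
    ∃ V : Set E, V ⊆ U ∧ IsOpen V ∧ x ∈ V ∧ IsOpen (g '' V) ∧ Set.InjOn g V ∧
      AnalyticOnNhd 𝕜 H (g '' V) ∧ (∀ y ∈ V, H (g y) = y) ∧ ∀ y ∈ g '' V, g (H y) = y := by
  set P := hg.toOpenPartialHomeomorph g
  have hPg : (P : E → F) = g := hg.toOpenPartialHomeomorph_coe
  obtain ⟨s, hs, hHs⟩ := hH.exists_mem_nhds_analyticOnNhd
  obtain ⟨Ω, hΩs, hΩ, hxΩ⟩ := mem_nhds_iff.mp hs
  obtain ⟨W, hWU, hW, hxW⟩ := mem_nhds_iff.mp (inter_mem hU hHg)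
  set V := (P.source ∩ P ⁻¹' Ω) ∩ W
  have hVP : V ⊆ P.source := fun y hy => hy.1.1
  have hHgV : ∀ y ∈ V, H (g y) = y := fun y hy => (hWU hy.2).2
  refine ⟨V, fun y hy => (hWU hy.2).1, (P.isOpen_inter_preimage hΩ).inter hW,
    ⟨⟨hg.mem_toOpenPartialHomeomorph_source, by rwa [hPg]⟩, hxW⟩,
    hPg ▸ P.isOpen_image_of_subset_source ((P.isOpen_inter_preimage hΩ).inter hW) hVP,
    ?_, ?_, hHgV, ?_⟩
  · intro y hy z hz hyz
    rw [← hHgV y hy, ← hHgV z hz, hyz]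
  · rintro _ ⟨y, hy, rfl⟩
    exact hHs _ (hΩs (hPg ▸ hy.1.2))
  · rintro _ ⟨y, hy, rfl⟩
    rw [hHgV y hy]

end LocalInverse

theorem exists_analyticAt_euclideanSpace_leftInverse {𝕜 : Type*} [RCLike 𝕜]
    {ι : Type*} [Fintype ι] {F : Type*} [NormedAddCommGroup F] [NormedSpace 𝕜 F]
    {g : EuclideanSpace 𝕜 ι → F} {x : EuclideanSpace 𝕜 ι}
    (hcoord : ∀ a : ι, ∃ Ha : F → 𝕜, AnalyticAt 𝕜 Ha (g x) ∧ Ha ∘ g =ᶠ[𝓝 x] fun z => z a) :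
    ∃ H : F → EuclideanSpace 𝕜 ι, AnalyticAt 𝕜 H (g x) ∧ H ∘ g =ᶠ[𝓝 x] id := by
  choose Ha hHa hHag using hcoord
  refine ⟨fun y => (EuclideanSpace.equiv ι 𝕜).symm fun a => Ha a y,
    (((EuclideanSpace.equiv ι 𝕜).symm : (ι → 𝕜) →L[𝕜] EuclideanSpace 𝕜 ι).analyticAt
      _).comp (AnalyticAt.pi hHa), ?_⟩
  filter_upwards [eventually_all.2 hHag] with z hz
  ext a
  exact hz a

theorem exists_analyticAt_comp_eq_of_surjective {n : ℕ} {φ : HoloGerm n → HoloGerm n}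
    (hφ : Function.Surjective φ) {g : Cn n → Cn n}
    (hpull : ∀ f : HoloGerm n, ∀ F : Cn n → ℂ, AnalyticAt ℂ F 0 →
      (↑F : Germ (𝓝 (0 : Cn n)) ℂ) = ↑f →
      (↑(φ f) : Germ (𝓝 (0 : Cn n)) ℂ) = ↑(F ∘ g)) (f : HoloGerm n) :
    ∃ F : Cn n → ℂ, AnalyticAt ℂ F 0 ∧ (↑(F ∘ g) : Germ (𝓝 (0 : Cn n)) ℂ) = ↑f := by
  obtain ⟨f', rfl⟩ := hφ f
  obtain ⟨F, hF, hFf'⟩ := f'.2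
  exact ⟨F, hF, (hpull f' F hF hFf').symm⟩

theorem isomorphism_gives_biholomorphism_general (n : ℕ)
    (φ : HoloGerm n →ₐ[ℂ] HoloGerm n) (hbij : Function.Bijective φ)
    (U' : Set (Cn n)) (hU'open : IsOpen U') (hU'mem : (0 : Cn n) ∈ U')
    (g : Cn n → Cn n) (hg : AnalyticOnNhd ℂ g U') (hg0 : g 0 = 0)
    (hpull : ∀ f : HoloGerm n, ∀ F : Cn n → ℂ, AnalyticAt ℂ F 0 →
      (↑F : Germ (𝓝 (0 : Cn n)) ℂ) = ↑f →
      (↑(φ f) : Germ (𝓝 (0 : Cn n)) ℂ) = ↑(F ∘ g)) :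
    (∃ L : Cn n ≃L[ℂ] Cn n, (L : Cn n →L[ℂ] Cn n) = fderiv ℂ g 0) ∧
    ∃ V : Set (Cn n), V ⊆ U' ∧ IsOpen V ∧ (0 : Cn n) ∈ V ∧ IsOpen (g '' V) ∧
      Set.InjOn g V ∧
      ∃ h : Cn n → Cn n, AnalyticOnNhd ℂ h (g '' V) ∧ (∀ x ∈ V, h (g x) = x) ∧
        ∀ y ∈ g '' V, g (h y) = y := by
  have hg0' : AnalyticAt ℂ g 0 := hg 0 hU'mem
  obtain ⟨H, hH, hHg⟩ := exists_analyticAt_euclideanSpace_leftInverse (g := g) (x := 0)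
    fun a => by
      obtain ⟨F, hF, hFg⟩ :=
        exists_analyticAt_comp_eq_of_surjective hbij.2 hpull (coordGerm n a)
      exact ⟨F, by rwa [hg0], Germ.coe_eq.mp hFg⟩
  obtain ⟨L, hL⟩ := exists_continuousLinearEquiv_eq_fderiv_of_leftInverse
    hg0'.differentiableAt hH.differentiableAt hHg
  obtain ⟨V, hVU', hV, h0V, hgV, hinj, hHV, hHgV, hgHV⟩ :=
    exists_open_restriction_with_analytic_inverse (hL ▸ hg0'.hasStrictFDerivAt) hH hHg
      (hU'open.mem_nhds hU'mem)
  exact ⟨⟨L, hL⟩, V, hVU', hV, h0V, hgV, hinj, H, hHV, hHgV, hgHV⟩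

/-- Let `φ : 𝒪ₙ → 𝒪ₙ` be a `ℂ`-algebra isomorphism with `φ(𝔪) ⊆ 𝔪`, and let `g` be a
holomorphic map on a neighbourhood `U'` of `0` with `g 0 = 0`, whose component germs at `0` are
the `φ(zₐ)`, so that `φ(f) = f ∘ g` as germs at `0` for all `f ∈ 𝒪ₙ`.  Then the derivative of
`g` at `0` is invertible, and after shrinking `U'` the map `g` is a biholomorphism onto an open
neighbourhood of `0` in `ℂⁿ`. -/
theorem isomorphism_gives_biholomorphism (n : ℕ) (hn : 1 ≤ n)
    (φ : HoloGerm n →ₐ[ℂ] HoloGerm n) (hbij : Function.Bijective φ)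
    (hφ : ∀ g ∈ mIdeal n, φ g ∈ mIdeal n)
    (U' : Set (Cn n)) (hU'open : IsOpen U') (hU'mem : (0 : Cn n) ∈ U')
    (g : Cn n → Cn n) (hg : AnalyticOnNhd ℂ g U') (hg0 : g 0 = 0)
    (hcomp : ∀ a : Fin n,
      (↑(fun x : Cn n => g x a) : Germ (𝓝 (0 : Cn n)) ℂ) = ↑(φ (coordGerm n a)))
    (hpull : ∀ f : HoloGerm n, ∀ F : Cn n → ℂ, AnalyticAt ℂ F 0 →
      (↑F : Germ (𝓝 (0 : Cn n)) ℂ) = ↑f →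
      (↑(φ f) : Germ (𝓝 (0 : Cn n)) ℂ) = ↑(F ∘ g)) :
    (∃ L : Cn n ≃L[ℂ] Cn n, (L : Cn n →L[ℂ] Cn n) = fderiv ℂ g 0) ∧
    ∃ V : Set (Cn n), V ⊆ U' ∧ IsOpen V ∧ (0 : Cn n) ∈ V ∧ IsOpen (g '' V) ∧
      Set.InjOn g V ∧
      ∃ h : Cn n → Cn n, AnalyticOnNhd ℂ h (g '' V) ∧ (∀ x ∈ V, h (g x) = x) ∧
        ∀ y ∈ g '' V, g (h y) = y :=
  isomorphism_gives_biholomorphism_general n φ hbij U' hU'open hU'mem g hg hg0 hpull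
end
end

section
/- With the gluing data as in the context, there exist open subsets Q_i ⊆ O_i, one for each i ∈ I, such that conditions (a), (b), (c) hold for all i, j ∈ I: (a) Q_i ⋐ O_i; (b) U_i × {0} ⊆ Q_i ⊆ U_i × ℂⁿ; (c) Q_ij ⋐ O_ij, where Q_ij := Q_i ∩ O_ij ∩ φ_ij⁻¹(Q_j). -/
open Set Topology

/-- The model fibre `ℂⁿ`. -/
abbrev ComplexN (n : ℕ) : Type := EuclideanSpace ℂ (Fin n)

/-- Gluing data, as in Ciocan-Fontanine–Iritani: a locally compact, first-countable Hausdorff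
space `M` with open covers `{Uᵢ}`, `{Vᵢ}`, `{Wᵢ}` satisfying `Uᵢ ⋐ Vᵢ ⋐ Wᵢ`, `{Vᵢ}` locally
finite, together with open neighbourhoods `Nᵢⱼ` of `Wᵢⱼ × {0}` in `Wᵢⱼ × ℂⁿ` and homeomorphisms
`φᵢⱼ : Nᵢⱼ → Nⱼᵢ` (encoded as globally defined functions) restricting to the identity on
`Wᵢⱼ × {0}`, with `φⱼᵢ = φᵢⱼ⁻¹`, `Nᵢᵢ = Wᵢ × ℂⁿ` and `φᵢᵢ = id`. -/
structure GluingData (M : Type*) [TopologicalSpace M] (n : ℕ) (I : Type*) where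
  U : I → Set M
  V : I → Set M
  W : I → Set M
  isOpen_U : ∀ i, IsOpen (U i)
  isOpen_V : ∀ i, IsOpen (V i)
  isOpen_W : ∀ i, IsOpen (W i)
  cover_U : ⋃ i, U i = univ
  cover_V : ⋃ i, V i = univ
  cover_W : ⋃ i, W i = univ
  U_compactClosure : ∀ i, IsCompact (closure (U i))
  closure_U_subset : ∀ i, closure (U i) ⊆ V i
  V_compactClosure : ∀ i, IsCompact (closure (V i))
  closure_V_subset : ∀ i, closure (V i) ⊆ W i
  locallyFinite_V : LocallyFinite V
  N : I → I → Set (M × ComplexN n)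
  isOpen_N : ∀ i j, IsOpen (N i j)
  N_subset : ∀ i j, N i j ⊆ (W i ∩ W j) ×ˢ univ
  zeroSection_subset_N : ∀ i j, (W i ∩ W j) ×ˢ ({0} : Set (ComplexN n)) ⊆ N i j
  φ : I → I → M × ComplexN n → M × ComplexN n
  continuousOn_φ : ∀ i j, ContinuousOn (φ i j) (N i j)
  φ_image : ∀ i j, φ i j '' N i j = N j i
  φ_leftInv : ∀ i j, ∀ x ∈ N i j, φ j i (φ i j x) = x
  φ_id_zeroSection : ∀ i j, ∀ x ∈ (W i ∩ W j) ×ˢ ({0} : Set (ComplexN n)), φ i j x = x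
  N_self : ∀ i, N i i = W i ×ˢ univ
  φ_self : ∀ i, ∀ x ∈ N i i, φ i i x = x

namespace GluingData

variable {M : Type*} [TopologicalSpace M] {n : ℕ} {I : Type*} (D : GluingData M n I)

/-- `Oᵢ := Vᵢ × ℂⁿ`. -/
def O (i : I) : Set (M × ComplexN n) := D.V i ×ˢ univ

/-- `Oᵢⱼ := (Vᵢⱼ × ℂⁿ) ∩ Nᵢⱼ ∩ φᵢⱼ⁻¹(Vᵢⱼ × ℂⁿ)`. -/
def Oij (i j : I) : Set (M × ComplexN n) :=
  ((D.V i ∩ D.V j) ×ˢ univ) ∩ D.N i j ∩ D.φ i j ⁻¹' ((D.V i ∩ D.V j) ×ˢ univ)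

/-- `Qᵢⱼ := Qᵢ ∩ Oᵢⱼ ∩ φᵢⱼ⁻¹(Qⱼ)`. -/
def Qij (Q : I → Set (M × ComplexN n)) (i j : I) : Set (M × ComplexN n) :=
  Q i ∩ D.Oij i j ∩ D.φ i j ⁻¹' (Q j)

/-- Condition (a): `Qᵢ ⋐ Oᵢ`. -/
def CondA (Q : I → Set (M × ComplexN n)) : Prop :=
  ∀ i, IsCompact (closure (Q i)) ∧ closure (Q i) ⊆ D.O i

/-- Condition (b): `Uᵢ × {0} ⊆ Qᵢ ⊆ Uᵢ × ℂⁿ`. -/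
def CondB (Q : I → Set (M × ComplexN n)) : Prop :=
  ∀ i, D.U i ×ˢ ({0} : Set (ComplexN n)) ⊆ Q i ∧ Q i ⊆ D.U i ×ˢ univ

/-- Condition (c): `Qᵢⱼ ⋐ Oᵢⱼ`. -/
def CondC (Q : I → Set (M × ComplexN n)) : Prop :=
  ∀ i j, IsCompact (closure (D.Qij Q i j)) ∧ closure (D.Qij Q i j) ⊆ D.Oij i j

/-- Condition (d): `Qᵢⱼ ∩ Qᵢₖ ⊆ φᵢⱼ⁻¹(Oⱼₖ)`. -/
def CondD (Q : I → Set (M × ComplexN n)) : Prop :=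
  ∀ i j k, D.Qij Q i j ∩ D.Qij Q i k ⊆ D.φ i j ⁻¹' (D.Oij j k)

/-- Condition (e): `φⱼₖ ∘ φᵢⱼ = φᵢₖ` on `Qᵢⱼ ∩ Qᵢₖ`. -/
def CondE (Q : I → Set (M × ComplexN n)) : Prop :=
  ∀ i j k, ∀ x ∈ D.Qij Q i j ∩ D.Qij Q i k, D.φ j k (D.φ i j x) = D.φ i k x

end GluingData

/-- With the gluing data as in the context, there exist open subsets `Qᵢ ⊆ Oᵢ` such that
conditions (a), (b), (c) hold for all `i, j ∈ I`. -/
theorem exists_Q_abc {M : Type*} [TopologicalSpace M] [T2Space M]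
    [LocallyCompactSpace M] [FirstCountableTopology M] {n : ℕ} {I : Type*}
    (D : GluingData M n I) :
    ∃ Q : I → Set (M × ComplexN n),
      (∀ i, IsOpen (Q i)) ∧ (∀ i, Q i ⊆ D.O i) ∧
      D.CondA Q ∧ D.CondB Q ∧ D.CondC Q := by

  classical
  have hUV : ∀ i, D.U i ⊆ D.V i := fun i => subset_closure.trans (D.closure_U_subset i)
  have hVW : ∀ i, D.V i ⊆ D.W i := fun i => subset_closure.trans (D.closure_V_subset i)
  have hclUW : ∀ i, closure (D.U i) ⊆ D.W i := fun i => (D.closure_U_subset i).trans (hVW i)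
  have hclVW : ∀ i, closure (D.V i) ⊆ D.W i := D.closure_V_subset
  -- `Oij` is open
  have hOij_open : ∀ i j, IsOpen (D.Oij i j) := by
    intro i j
    have h1 : IsOpen ((D.V i ∩ D.V j) ×ˢ (univ : Set (ComplexN n))) :=
      ((D.isOpen_V i).inter (D.isOpen_V j)).prod isOpen_univ
    have h2 : IsOpen (D.N i j ∩ D.φ i j ⁻¹' ((D.V i ∩ D.V j) ×ˢ univ)) :=
      (D.continuousOn_φ i j).isOpen_inter_preimage (D.isOpen_N i j) h1
    have heq : D.Oij i j
        = ((D.V i ∩ D.V j) ×ˢ (univ : Set (ComplexN n)))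
          ∩ (D.N i j ∩ D.φ i j ⁻¹' ((D.V i ∩ D.V j) ×ˢ univ)) := by
      rw [GluingData.Oij, inter_assoc]
    rw [heq]
    exact h1.inter h2
  -- the zero section over `cl Uᵢ ∩ cl Uⱼ` sits inside `Oij`
  have hzero : ∀ i j,
      (closure (D.U i) ∩ closure (D.U j)) ×ˢ ({0} : Set (ComplexN n)) ⊆ D.Oij i j := by
    intro i j x hx
    obtain ⟨hx1, hx2⟩ := hx
    have hz : x.2 = 0 := hx2
    have hVi : x.1 ∈ D.V i := D.closure_U_subset i hx1.1
    have hVj : x.1 ∈ D.V j := D.closure_U_subset j hx1.2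
    have hW : x.1 ∈ D.W i ∩ D.W j := ⟨hVW i hVi, hVW j hVj⟩
    have hNx : x ∈ D.N i j := D.zeroSection_subset_N i j ⟨hW, hx2⟩
    have hφx : D.φ i j x = x := D.φ_id_zeroSection i j x ⟨hW, hx2⟩
    refine ⟨⟨⟨⟨hVi, hVj⟩, mem_univ _⟩, hNx⟩, ?_⟩
    simp only [mem_preimage, hφx]
    exact ⟨⟨hVi, hVj⟩, mem_univ _⟩
  -- key per-pair data
  have key : ∀ i j, ∃ (K : Set (M × ComplexN n)) (A B : Set M) (δ η : ℝ),
      IsCompact K ∧ K ⊆ D.Oij i j ∧ IsOpen A ∧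
      closure (D.U i) ∩ closure (D.U j) ⊆ A ∧ 0 < δ ∧
      A ×ˢ Metric.ball (0 : ComplexN n) δ ⊆ K ∧
      (closure (D.U i) ∩ closure (D.V j)) \ A ⊆ B ∧ 0 < η ∧
      B ×ˢ Metric.ball (0 : ComplexN n) η ⊆
        D.N i j ∩ D.φ i j ⁻¹' ((closure (D.U j) ×ˢ (univ : Set (ComplexN n)))ᶜ) := by
    intro i j
    have hsc : IsCompact (closure (D.U i) ∩ closure (D.U j)) :=
      (D.U_compactClosure i).inter_right isClosed_closure
    have hKc : IsCompact
        ((closure (D.U i) ∩ closure (D.U j)) ×ˢ ({0} : Set (ComplexN n))) :=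
      hsc.prod isCompact_singleton
    obtain ⟨K, hKcomp, hKint, hKsub⟩ :=
      exists_compact_between hKc (hOij_open i j) (hzero i j)
    obtain ⟨A, v, hA, hv, hsA, h0v, hAv⟩ :=
      generalized_tube_lemma hsc isCompact_singleton isOpen_interior hKint
    obtain ⟨δ, hδ, hball⟩ := Metric.isOpen_iff.mp hv 0 (h0v rfl)
    -- second tube
    have hLc : IsCompact ((closure (D.U i) ∩ closure (D.V j)) \ A) :=
      ((D.U_compactClosure i).inter_right isClosed_closure).diff hA
    have hopen2 : IsOpen (D.N i j ∩ D.φ i j ⁻¹'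
        ((closure (D.U j) ×ˢ (univ : Set (ComplexN n)))ᶜ)) :=
      (D.continuousOn_φ i j).isOpen_inter_preimage (D.isOpen_N i j)
        (isClosed_closure.prod isClosed_univ).isOpen_compl
    have hLsub : ((closure (D.U i) ∩ closure (D.V j)) \ A) ×ˢ ({0} : Set (ComplexN n)) ⊆
        D.N i j ∩ D.φ i j ⁻¹' ((closure (D.U j) ×ˢ (univ : Set (ComplexN n)))ᶜ) := by
      intro x hx
      obtain ⟨hx1, hx2⟩ := hx
      have hW : x.1 ∈ D.W i ∩ D.W j := ⟨hclUW i hx1.1.1, hclVW j hx1.1.2⟩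
      have hNx : x ∈ D.N i j := D.zeroSection_subset_N i j ⟨hW, hx2⟩
      have hφx : D.φ i j x = x := D.φ_id_zeroSection i j x ⟨hW, hx2⟩
      refine ⟨hNx, ?_⟩
      simp only [mem_preimage, hφx]
      intro hmem
      exact hx1.2 (hsA ⟨hx1.1.1, hmem.1⟩)
    obtain ⟨B, w, hB, hw, hLB, h0w, hBw⟩ :=
      generalized_tube_lemma hLc isCompact_singleton hopen2 hLsub
    obtain ⟨η, hη, hballw⟩ := Metric.isOpen_iff.mp hw 0 (h0w rfl)
    refine ⟨K, A, B, δ, η, hKcomp, hKsub, hA, hsA, hδ, ?_, hLB, hη, ?_⟩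
    · exact (prod_mono subset_rfl hball).trans (hAv.trans interior_subset)
    · exact (prod_mono subset_rfl hballw).trans hBw
  choose K A B δ η hKcomp hKsub hAo hsA hδ hAK hLB hη hBN using key
  -- finitely many relevant indices
  have hfin : ∀ i, {j | (D.V j ∩ closure (D.V i)).Nonempty}.Finite :=
    fun i => D.locallyFinite_V.finite_nonempty_inter_compact (D.V_compactClosure i)
  have hεex : ∀ i, ∃ ε : ℝ, 0 < ε ∧
      ∀ j, (D.V j ∩ closure (D.V i)).Nonempty → ε ≤ min (δ i j) (η i j) := by
    intro i
    set G : Finset ℝ :=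
      insert 1 ((hfin i).toFinset.image fun j => min (δ i j) (η i j)) with hG
    have hGne : G.Nonempty := ⟨1, Finset.mem_insert_self _ _⟩
    refine ⟨G.min' hGne, ?_, ?_⟩
    · have hpos : ∀ x ∈ G, (0 : ℝ) < x := by
        intro x hx
        rcases Finset.mem_insert.mp hx with h | h
        · rw [h]; norm_num
        · obtain ⟨j, _, hj⟩ := Finset.mem_image.mp h
          rw [← hj]; exact lt_min (hδ i j) (hη i j)
      exact hpos _ (G.min'_mem hGne)
    · intro j hj
      exact G.min'_le _ (Finset.mem_insert_of_mem
        (Finset.mem_image_of_mem _ ((hfin i).mem_toFinset.mpr hj)))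
  choose ε hε0 hεle using hεex
  refine ⟨fun i => D.U i ×ˢ Metric.ball (0 : ComplexN n) (ε i),
    fun i => (D.isOpen_U i).prod Metric.isOpen_ball,
    fun i => prod_mono (hUV i) (subset_univ _), ?_, ?_, ?_⟩
  · -- CondA
    intro i
    have hcl : closure (D.U i ×ˢ Metric.ball (0 : ComplexN n) (ε i)) ⊆
        closure (D.U i) ×ˢ Metric.closedBall (0 : ComplexN n) (ε i) := by
      rw [closure_prod_eq]
      exact prod_mono subset_rfl Metric.closure_ball_subset_closedBall
    constructor
    · exact ((D.U_compactClosure i).prod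
        (isCompact_closedBall (0 : ComplexN n) (ε i))).of_isClosed_subset
        isClosed_closure hcl
    · exact hcl.trans (prod_mono (D.closure_U_subset i) (subset_univ _))
  · -- CondB
    intro i
    constructor
    · exact prod_mono subset_rfl
        (singleton_subset_iff.mpr (Metric.mem_ball_self (hε0 i)))
    · exact prod_mono subset_rfl (subset_univ _)
  · -- CondC
    intro i j
    have hQK : D.Qij (fun i => D.U i ×ˢ Metric.ball (0 : ComplexN n) (ε i)) i j
        ⊆ K i j := by
      intro x hx
      obtain ⟨⟨hxQ, hxO⟩, hxφ⟩ := hx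
      obtain ⟨⟨hxprod, _⟩, _⟩ := hxO
      have hjS : (D.V j ∩ closure (D.V i)).Nonempty :=
        ⟨x.1, hxprod.1.2, subset_closure hxprod.1.1⟩
      have hle := hεle i j hjS
      have hx2δ : x.2 ∈ Metric.ball (0 : ComplexN n) (δ i j) :=
        Metric.ball_subset_ball (hle.trans (min_le_left _ _)) hxQ.2
      have hx2η : x.2 ∈ Metric.ball (0 : ComplexN n) (η i j) :=
        Metric.ball_subset_ball (hle.trans (min_le_right _ _)) hxQ.2
      by_cases hA' : x.1 ∈ A i j
      · exact hAK i j ⟨hA', hx2δ⟩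
      · exfalso
        have hxB : x.1 ∈ B i j :=
          hLB i j ⟨⟨subset_closure hxQ.1, subset_closure hxprod.1.2⟩, hA'⟩
        have hmem := hBN i j (⟨hxB, hx2η⟩ :
          x ∈ B i j ×ˢ Metric.ball (0 : ComplexN n) (η i j))
        exact hmem.2 ⟨subset_closure hxφ.1, mem_univ _⟩
    have hclK : closure (D.Qij (fun i => D.U i ×ˢ Metric.ball (0 : ComplexN n) (ε i)) i j)
        ⊆ K i j := closure_minimal hQK (hKcomp i j).isClosed
    exact ⟨(hKcomp i j).of_isClosed_subset isClosed_closure hclK,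
      hclK.trans (hKsub i j)⟩
end

section
/- With the gluing data as in the context, fix i, j ∈ I, and let P be an open subset of O_ij whose closure is compact and contained in O_ij, such that P contains (cl(U_i) ∩ cl(U_j)) × {0}, where cl denotes closure in M. Then there exists a positive integer n₀ such that (U_i × {ζ ∈ ℂⁿ : |ζ| < 1/n₀}) ∩ O_ij ∩ φ_ij⁻¹(U_j × {ζ ∈ ℂⁿ : |ζ| < 1/n₀}) ⊆ P. -/
open Set Topology

/-- With the gluing data as in the context, fix `i, j ∈ I`, and let `P` be an open subset of
`Oᵢⱼ` whose closure is compact and contained in `Oᵢⱼ`, such that `P` contains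
`(cl(Uᵢ) ∩ cl(Uⱼ)) × {0}`.  Then there exists a positive integer `n₀` such that
`(Uᵢ × {ζ : |ζ| < 1/n₀}) ∩ Oᵢⱼ ∩ φᵢⱼ⁻¹(Uⱼ × {ζ : |ζ| < 1/n₀}) ⊆ P`. -/
theorem exists_nat_tube_subset {M : Type*} [TopologicalSpace M] [T2Space M]
    [LocallyCompactSpace M] [FirstCountableTopology M] {n : ℕ} {I : Type*}
    (D : GluingData M n I) (i j : I)
    (P : Set (M × ComplexN n)) (hPopen : IsOpen P) (hPcpt : IsCompact (closure P))
    (hPsub : closure P ⊆ D.Oij i j)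
    (hPcontains : (closure (D.U i) ∩ closure (D.U j)) ×ˢ ({0} : Set (ComplexN n)) ⊆ P) :
    ∃ n₀ : ℕ, 0 < n₀ ∧
      (D.U i ×ˢ Metric.ball (0 : ComplexN n) (1 / n₀)) ∩ D.Oij i j ∩
        D.φ i j ⁻¹' (D.U j ×ˢ Metric.ball (0 : ComplexN n) (1 / n₀)) ⊆ P := by
  by_contra hcon
  push_neg at hcon
  have hex : ∀ m : ℕ, ∃ y,
      y ∈ (D.U i ×ˢ Metric.ball (0 : ComplexN n) (1 / ((m+1 : ℕ) : ℝ))) ∩ D.Oij i j ∩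
        D.φ i j ⁻¹' (D.U j ×ˢ Metric.ball (0 : ComplexN n) (1 / ((m+1 : ℕ) : ℝ))) ∧ y ∉ P := by
    intro m
    obtain ⟨y, hy, hyP⟩ := not_subset.mp (hcon (m+1) (Nat.succ_pos m))
    exact ⟨y, hy, hyP⟩
  choose x hx hxP using hex
  -- basic membership facts
  have hUi : ∀ m, (x m).1 ∈ D.U i := fun m => (hx m).1.1.1
  have hball : ∀ m, ‖(x m).2‖ < 1 / ((m+1 : ℕ) : ℝ) := by
    intro m
    have := (hx m).1.1.2
    simpa [mem_ball_zero_iff] using this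
  have hOij : ∀ m, x m ∈ D.Oij i j := fun m => (hx m).1.2
  have hVj : ∀ m, (x m).1 ∈ D.V j := fun m => ((hx m).1.2).1.1.1.2
  have hNij : ∀ m, x m ∈ D.N i j := fun m => ((hx m).1.2).1.2
  have hφUj : ∀ m, (D.φ i j (x m)).1 ∈ D.U j := fun m => (hx m).2.1
  -- the compact set containing the sequence
  have hKcpt : IsCompact ((closure (D.U i)) ×ˢ (Metric.closedBall (0 : ComplexN n) 1)) :=
    (D.U_compactClosure i).prod (isCompact_closedBall _ _)
  have hxK : ∀ m, x m ∈ (closure (D.U i)) ×ˢ (Metric.closedBall (0 : ComplexN n) 1) := by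
    intro m
    refine ⟨subset_closure (hUi m), ?_⟩
    have h1 : (1 : ℝ) / ((m+1 : ℕ) : ℝ) ≤ 1 := by
      rw [div_le_one (by positivity)]
      exact_mod_cast Nat.one_le_iff_ne_zero.mpr (Nat.succ_ne_zero m)
    simpa [Metric.mem_closedBall, dist_zero_right] using (hball m).le.trans h1
  obtain ⟨a, haK, ψ, hψ, htend⟩ := hKcpt.isSeqCompact hxK
  -- second coordinate tends to 0
  have htend2 : Filter.Tendsto (fun k => (x (ψ k)).2) Filter.atTop (nhds 0) := by
    refine squeeze_zero_norm (fun k => ?_) tendsto_one_div_add_atTop_nhds_zero_nat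
    refine (hball (ψ k)).le.trans ?_
    apply one_div_le_one_div_of_le (by positivity)
    exact_mod_cast Nat.succ_le_succ (hψ.le_apply)
  have ha2 : a.2 = 0 := by
    have := (continuous_snd.tendsto a).comp htend
    exact tendsto_nhds_unique this htend2
  have htend1 : Filter.Tendsto (fun k => (x (ψ k)).1) Filter.atTop (nhds a.1) :=
    (continuous_fst.tendsto a).comp htend
  have haUi : a.1 ∈ closure (D.U i) := haK.1
  have haVj : a.1 ∈ closure (D.V j) :=
    mem_closure_of_tendsto htend1 (Filter.Eventually.of_forall fun k => hVj (ψ k))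
  have haW : a.1 ∈ D.W i ∩ D.W j :=
    ⟨D.closure_V_subset i (subset_closure (D.closure_U_subset i haUi)),
      D.closure_V_subset j haVj⟩
  have haZero : a ∈ (D.W i ∩ D.W j) ×ˢ ({0} : Set (ComplexN n)) := ⟨haW, ha2⟩
  have haN : a ∈ D.N i j := D.zeroSection_subset_N i j haZero
  have hφa : D.φ i j a = a := D.φ_id_zeroSection i j a haZero
  -- continuity of φ at a within N i j
  have htendN : Filter.Tendsto (fun k => x (ψ k)) Filter.atTop (nhdsWithin a (D.N i j)) := by
    rw [tendsto_nhdsWithin_iff]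
    exact ⟨htend, Filter.Eventually.of_forall fun k => hNij (ψ k)⟩
  have htendφ : Filter.Tendsto (fun k => D.φ i j (x (ψ k))) Filter.atTop (nhds a) := by
    have := ((D.continuousOn_φ i j a haN).tendsto).comp htendN
    rwa [hφa] at this
  have haUj : a.1 ∈ closure (D.U j) :=
    mem_closure_of_tendsto ((continuous_fst.tendsto a).comp htendφ)
      (Filter.Eventually.of_forall fun k => hφUj (ψ k))
  -- a ∈ P
  have haP : a ∈ P := by
    apply hPcontains
    exact ⟨⟨haUi, haUj⟩, ha2⟩
  -- contradiction: sequence eventually in P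
  have : ∀ᶠ k in Filter.atTop, x (ψ k) ∈ P :=
    htend (hPopen.mem_nhds haP)
  obtain ⟨k, hk⟩ := this.exists
  exact hxP (ψ k) hk
end

section
/- With the gluing data as in the context, let {Q_i : i ∈ I} be open subsets Q_i ⊆ O_i satisfying conditions (a), (b), (c) for all i, j ∈ I. Then for each i, j ∈ I, the image of the map Q_ij → Q_i × Q_j given by x ↦ (x, φ_ij(x)) is a closed subset of Q_i × Q_j. -/
open Set Topology

theorem isClosed_preimage_val_graph_image {X Y : Type*} [TopologicalSpace X] [T2Space X]
    [TopologicalSpace Y] [T2Space Y] {f : X → Y} {s : Set X} {t : Set (X × Y)}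
    (hs : IsCompact (closure s)) (hf : ContinuousOn f (closure s))
    (hst : ∀ x ∈ closure s, (x, f x) ∈ t → x ∈ s) :
    IsClosed (Subtype.val ⁻¹' ((fun x => (x, f x)) '' s) : Set t) := by
  have hclosed : IsClosed ((fun x => (x, f x)) '' closure s) :=
    (hs.image_of_continuousOn (continuousOn_id.prodMk hf)).isClosed
  have hgraph : (Subtype.val ⁻¹' ((fun x => (x, f x)) '' s) : Set t) =
      Subtype.val ⁻¹' ((fun x => (x, f x)) '' closure s) := by
    refine Subset.antisymm (fun p hp => image_mono subset_closure hp) ?_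
    rintro ⟨_, hpt⟩ ⟨x, hx, rfl⟩
    exact ⟨x, hst x hx hpt, rfl⟩
  rw [hgraph]
  exact hclosed.preimage continuous_subtype_val

theorem isClosed_graph_in_prod_general {M : Type*} [TopologicalSpace M] [T2Space M]
    {n : ℕ} {I : Type*}
    (D : GluingData M n I) (Q : I → Set (M × ComplexN n))
    (hc : D.CondC Q) (i j : I) :
    IsClosed (Subtype.val ⁻¹'
        ((fun x => (x, D.φ i j x)) '' D.Qij Q i j) : Set ↥(Q i ×ˢ Q j)) := by
  obtain ⟨hcompact, hclosure⟩ := hc i j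
  refine isClosed_preimage_val_graph_image hcompact
    ((D.continuousOn_φ i j).mono fun x hx => (hclosure hx).1.2) ?_
  rintro x hx ⟨hxi, hxj⟩
  exact ⟨⟨hxi, hclosure hx⟩, hxj⟩

/-- With the gluing data as in the context, if the open subsets `Qᵢ ⊆ Oᵢ` satisfy conditions
(a), (b), (c), then for each `i, j ∈ I` the image of the map `Qᵢⱼ → Qᵢ × Qⱼ` given by
`x ↦ (x, φᵢⱼ(x))` is a closed subset of `Qᵢ × Qⱼ` (with its subspace topology). -/
theorem isClosed_graph_in_prod {M : Type*} [TopologicalSpace M] [T2Space M]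
    [LocallyCompactSpace M] [FirstCountableTopology M] {n : ℕ} {I : Type*}
    (D : GluingData M n I) (Q : I → Set (M × ComplexN n))
    (hQopen : ∀ i, IsOpen (Q i)) (hQsub : ∀ i, Q i ⊆ D.O i)
    (ha : D.CondA Q) (hb : D.CondB Q) (hc : D.CondC Q) (i j : I) :
    IsClosed (Subtype.val ⁻¹'
        ((fun x => (x, D.φ i j x)) '' D.Qij Q i j) : Set ↥(Q i ×ˢ Q j)) :=
  isClosed_graph_in_prod_general D Q hc i j
end

section
/- With the gluing data as in the context, assume in addition the cocycle germ condition: for all i, j, k ∈ I and every x ∈ W_i ∩ W_j ∩ W_k there is an open neighbourhood N_x of (x, 0) in M × ℂⁿ such that N_x ⊆ N_ij ∩ N_ik ∩ φ_ij⁻¹(N_jk) and φ_jk(φ_ij(y)) = φ_ik(y) for all y ∈ N_x. Then there exist open subsets Q_i ⊆ O_i, one for each i ∈ I, satisfying all five conditions (a), (b), (c), (d), (e) for all i, j, k ∈ I. -/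
open Set Topology

/-- With the gluing data as in the context, assume in addition the cocycle germ condition: for
all `i, j, k ∈ I` and every `x ∈ Wᵢ ∩ Wⱼ ∩ Wₖ` there is an open neighbourhood `Nₓ` of `(x, 0)`
in `M × ℂⁿ` with `Nₓ ⊆ Nᵢⱼ ∩ Nᵢₖ ∩ φᵢⱼ⁻¹(Nⱼₖ)` on which `φⱼₖ ∘ φᵢⱼ = φᵢₖ`.  Then there exist
open subsets `Qᵢ ⊆ Oᵢ` satisfying all of conditions (a)–(e). -/
theorem exists_Q_abcde {M : Type*} [TopologicalSpace M] [T2Space M]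
    [LocallyCompactSpace M] [FirstCountableTopology M] {n : ℕ} {I : Type*}
    (D : GluingData M n I)
    (hcocycle : ∀ i j k, ∀ x ∈ D.W i ∩ D.W j ∩ D.W k,
      ∃ Nx : Set (M × ComplexN n), IsOpen Nx ∧ (x, (0 : ComplexN n)) ∈ Nx ∧
        Nx ⊆ D.N i j ∩ D.N i k ∩ D.φ i j ⁻¹' (D.N j k) ∧
        ∀ y ∈ Nx, D.φ j k (D.φ i j y) = D.φ i k y) :
    ∃ Q : I → Set (M × ComplexN n),
      (∀ i, IsOpen (Q i)) ∧ (∀ i, Q i ⊆ D.O i) ∧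
      D.CondA Q ∧ D.CondB Q ∧ D.CondC Q ∧ D.CondD Q ∧ D.CondE Q := by
  classical
  have hUV : ∀ i, D.U i ⊆ D.V i := fun i => subset_closure.trans (D.closure_U_subset i)
  have hVW : ∀ i, D.V i ⊆ D.W i := fun i => subset_closure.trans (D.closure_V_subset i)
  have hcVW : ∀ i, closure (D.V i) ⊆ D.W i := D.closure_V_subset
  -- openness of Oij
  have hOijOpen : ∀ i j, IsOpen (D.Oij i j) := by
    intro i j
    have h1 : IsOpen ((D.V i ∩ D.V j) ×ˢ (univ : Set (ComplexN n))) :=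
      ((D.isOpen_V i).inter (D.isOpen_V j)).prod isOpen_univ
    have h2 := (D.continuousOn_φ i j).isOpen_inter_preimage (D.isOpen_N i j) h1
    have heq : D.Oij i j = ((D.V i ∩ D.V j) ×ˢ (univ : Set (ComplexN n))) ∩
        (D.N i j ∩ D.φ i j ⁻¹' ((D.V i ∩ D.V j) ×ˢ univ)) := by
      rw [GluingData.Oij, inter_assoc]
    rw [heq]
    exact h1.inter h2
  -- pair lemma
  have pair : ∀ i j : I, ∃ G : Set (M × ComplexN n), IsOpen G ∧
      (closure (D.V i) ∩ closure (D.V j)) ×ˢ ({0} : Set (ComplexN n)) ⊆ G ∧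
      ∀ S : Set (M × ComplexN n), S ⊆ G → S ⊆ D.U i ×ˢ univ →
        S ⊆ D.φ i j ⁻¹' (D.U j ×ˢ univ) → closure S ⊆ D.Oij i j := by
    intro i j
    have key : ∀ p ∈ closure (D.V i) ∩ closure (D.V j),
        ∃ A : Set (M × ComplexN n), IsOpen A ∧ (p, (0 : ComplexN n)) ∈ A ∧
        ∀ S : Set (M × ComplexN n), S ⊆ D.U i ×ˢ univ →
          S ⊆ D.φ i j ⁻¹' (D.U j ×ˢ univ) → closure (S ∩ A) ⊆ D.Oij i j := by
      intro p hp
      have hpW : p ∈ D.W i ∩ D.W j := ⟨hcVW i hp.1, hcVW j hp.2⟩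
      have hpN : (p, (0 : ComplexN n)) ∈ D.N i j :=
        D.zeroSection_subset_N i j ⟨hpW, rfl⟩
      have hφp : D.φ i j (p, (0 : ComplexN n)) = (p, (0 : ComplexN n)) :=
        D.φ_id_zeroSection i j _ ⟨hpW, rfl⟩
      by_cases hui : p ∈ closure (D.U i)
      · by_cases huj : p ∈ closure (D.U j)
        · -- (p,0) ∈ Oij; take a compact neighbourhood inside it
          have hmem : (p, (0 : ComplexN n)) ∈ D.Oij i j := by
            refine ⟨⟨⟨⟨D.closure_U_subset i hui, D.closure_U_subset j huj⟩, trivial⟩, hpN⟩, ?_⟩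
            rw [Set.mem_preimage, hφp]
            exact ⟨⟨D.closure_U_subset i hui, D.closure_U_subset j huj⟩, trivial⟩
          obtain ⟨L, hLc, hLint, hLsub⟩ := exists_compact_between isCompact_singleton
            (hOijOpen i j) (singleton_subset_iff.2 hmem)
          refine ⟨interior L, isOpen_interior, hLint rfl, fun S _ _ => ?_⟩
          refine (closure_mono inter_subset_right).trans ?_
          exact (closure_minimal interior_subset hLc.isClosed).trans hLsub
        · -- kill via φ and U j
          refine ⟨D.N i j ∩ D.φ i j ⁻¹' ((closure (D.U j))ᶜ ×ˢ univ),
            (D.continuousOn_φ i j).isOpen_inter_preimage (D.isOpen_N i j)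
              ((isClosed_closure.isOpen_compl).prod isOpen_univ),
            ⟨hpN, by rw [Set.mem_preimage, hφp]; exact ⟨huj, trivial⟩⟩, fun S _ hS2 => ?_⟩
          have hSA : S ∩ (D.N i j ∩ D.φ i j ⁻¹' ((closure (D.U j))ᶜ ×ˢ univ)) = ∅ := by
            ext x
            simp only [Set.mem_inter_iff, Set.mem_empty_iff_false, iff_false]
            rintro ⟨hxS, -, hxφ⟩
            exact hxφ.1 (subset_closure (hS2 hxS).1)
          rw [hSA, closure_empty]
          exact empty_subset _
      · -- kill via U i
        refine ⟨(closure (D.U i))ᶜ ×ˢ univ,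
          (isClosed_closure.isOpen_compl).prod isOpen_univ, ⟨hui, trivial⟩,
          fun S hS1 _ => ?_⟩
        have hSA : S ∩ ((closure (D.U i))ᶜ ×ˢ (univ : Set (ComplexN n))) = ∅ := by
          ext x
          simp only [Set.mem_inter_iff, Set.mem_empty_iff_false, iff_false]
          rintro ⟨hxS, hxc, -⟩
          exact hxc (subset_closure (hS1 hxS).1)
        rw [hSA, closure_empty]
        exact empty_subset _
    choose A hAo hAm hAg using key
    have hKc : IsCompact ((closure (D.V i) ∩ closure (D.V j)) ×ˢ ({0} : Set (ComplexN n))) :=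
      ((D.V_compactClosure i).inter_right isClosed_closure).prod isCompact_singleton
    have hcov : (closure (D.V i) ∩ closure (D.V j)) ×ˢ ({0} : Set (ComplexN n)) ⊆
        ⋃ p : ↥(closure (D.V i) ∩ closure (D.V j)), A p.1 p.2 := by
      rintro ⟨z1, z2⟩ ⟨hz1, hz2⟩
      have hz2' : z2 = 0 := hz2
      subst hz2'
      exact mem_iUnion.2 ⟨⟨z1, hz1⟩, hAm z1 hz1⟩
    obtain ⟨t, ht⟩ := hKc.elim_finite_subcover
      (fun p : ↥(closure (D.V i) ∩ closure (D.V j)) => A p.1 p.2)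
      (fun p => hAo p.1 p.2) hcov
    refine ⟨⋃ p ∈ t, A p.1 p.2, isOpen_biUnion fun p _ => hAo p.1 p.2, ht,
      fun S hG hS1 hS2 => ?_⟩
    have hdecomp : S ⊆ ⋃ p ∈ t, (S ∩ A p.1 p.2) := by
      intro x hx
      obtain ⟨p, hp, hxA⟩ := mem_iUnion₂.1 (hG hx)
      exact mem_iUnion₂.2 ⟨p, hp, hx, hxA⟩
    have h1 : closure S ⊆ ⋃ p ∈ t, closure (S ∩ A p.1 p.2) :=
      closure_minimal (hdecomp.trans (iUnion₂_mono fun p _ => subset_closure))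
        (t.finite_toSet.isClosed_biUnion fun _ _ => isClosed_closure)
    exact h1.trans (iUnion₂_subset fun p _ => hAg p.1 p.2 S hS1 hS2)
  -- triple lemma
  have triple : ∀ i j k : I, ∃ G : Set (M × ComplexN n), IsOpen G ∧
      ((closure (D.V i) ∩ closure (D.V j)) ∩ closure (D.V k)) ×ˢ ({0} : Set (ComplexN n)) ⊆ G ∧
      ∀ x ∈ G, D.φ i j x ∈ D.U j ×ˢ univ → D.φ i k x ∈ D.U k ×ˢ univ →
        D.φ i j x ∈ D.Oij j k ∧ D.φ j k (D.φ i j x) = D.φ i k x := by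
    intro i j k
    have key : ∀ p ∈ (closure (D.V i) ∩ closure (D.V j)) ∩ closure (D.V k),
        ∃ A : Set (M × ComplexN n), IsOpen A ∧ (p, (0 : ComplexN n)) ∈ A ∧
        ∀ x ∈ A, D.φ i j x ∈ D.U j ×ˢ univ → D.φ i k x ∈ D.U k ×ˢ univ →
          D.φ i j x ∈ D.Oij j k ∧ D.φ j k (D.φ i j x) = D.φ i k x := by
      intro p hp
      have hpWi : p ∈ D.W i := hcVW i hp.1.1
      have hpWj : p ∈ D.W j := hcVW j hp.1.2
      have hpWk : p ∈ D.W k := hcVW k hp.2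
      obtain ⟨Nx, hNxo, hNxm, hNxsub, hNxcoc⟩ := hcocycle i j k p ⟨⟨hpWi, hpWj⟩, hpWk⟩
      have hpNij : (p, (0 : ComplexN n)) ∈ D.N i j :=
        D.zeroSection_subset_N i j ⟨⟨hpWi, hpWj⟩, rfl⟩
      have hpNik : (p, (0 : ComplexN n)) ∈ D.N i k :=
        D.zeroSection_subset_N i k ⟨⟨hpWi, hpWk⟩, rfl⟩
      have hφijp : D.φ i j (p, (0 : ComplexN n)) = (p, (0 : ComplexN n)) :=
        D.φ_id_zeroSection i j _ ⟨⟨hpWi, hpWj⟩, rfl⟩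
      have hφikp : D.φ i k (p, (0 : ComplexN n)) = (p, (0 : ComplexN n)) :=
        D.φ_id_zeroSection i k _ ⟨⟨hpWi, hpWk⟩, rfl⟩
      by_cases hj : p ∈ D.V j
      · by_cases hk : p ∈ D.V k
        · refine ⟨Nx ∩ (D.N i j ∩ D.φ i j ⁻¹' (D.V k ×ˢ univ)) ∩
            (D.N i k ∩ D.φ i k ⁻¹' (D.V j ×ˢ univ)),
            (hNxo.inter ((D.continuousOn_φ i j).isOpen_inter_preimage (D.isOpen_N i j)
              ((D.isOpen_V k).prod isOpen_univ))).inter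
              ((D.continuousOn_φ i k).isOpen_inter_preimage (D.isOpen_N i k)
              ((D.isOpen_V j).prod isOpen_univ)),
            ⟨⟨hNxm, hpNij, by rw [Set.mem_preimage, hφijp]; exact ⟨hk, trivial⟩⟩,
              hpNik, by rw [Set.mem_preimage, hφikp]; exact ⟨hj, trivial⟩⟩, ?_⟩
          intro x hx hyj hyk
          have hxNx : x ∈ Nx := hx.1.1
          have hsub := hNxsub hxNx
          have hcoc := hNxcoc x hxNx
          refine ⟨⟨⟨⟨⟨hUV j hyj.1, hx.1.2.2.1⟩, trivial⟩, hsub.2⟩, ?_⟩, hcoc⟩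
          rw [Set.mem_preimage, hcoc]
          exact ⟨⟨hx.2.2.1, hUV k hyk.1⟩, trivial⟩
        · -- p ∉ V k : kill via φ i k
          have hk' : p ∉ closure (D.U k) := fun h => hk (D.closure_U_subset k h)
          refine ⟨Nx ∩ (D.N i k ∩ D.φ i k ⁻¹' ((closure (D.U k))ᶜ ×ˢ univ)),
            hNxo.inter ((D.continuousOn_φ i k).isOpen_inter_preimage (D.isOpen_N i k)
              ((isClosed_closure.isOpen_compl).prod isOpen_univ)),
            ⟨hNxm, hpNik, by rw [Set.mem_preimage, hφikp]; exact ⟨hk', trivial⟩⟩, ?_⟩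
          intro x hx hyj hyk
          exact absurd (subset_closure hyk.1) hx.2.2.1
      · -- p ∉ V j : kill via φ i j
        have hj' : p ∉ closure (D.U j) := fun h => hj (D.closure_U_subset j h)
        refine ⟨Nx ∩ (D.N i j ∩ D.φ i j ⁻¹' ((closure (D.U j))ᶜ ×ˢ univ)),
          hNxo.inter ((D.continuousOn_φ i j).isOpen_inter_preimage (D.isOpen_N i j)
            ((isClosed_closure.isOpen_compl).prod isOpen_univ)),
          ⟨hNxm, hpNij, by rw [Set.mem_preimage, hφijp]; exact ⟨hj', trivial⟩⟩, ?_⟩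
        intro x hx hyj hyk
        exact absurd (subset_closure hyj.1) hx.2.2.1
    choose A hAo hAm hAg using key
    refine ⟨⋃ p : ↥((closure (D.V i) ∩ closure (D.V j)) ∩ closure (D.V k)), A p.1 p.2,
      isOpen_iUnion fun p => hAo p.1 p.2, ?_, ?_⟩
    · rintro ⟨z1, z2⟩ ⟨hz1, hz2⟩
      have hz2' : z2 = 0 := hz2
      subst hz2'
      exact mem_iUnion.2 ⟨⟨z1, hz1⟩, hAm z1 hz1⟩
    · intro x hx hyj hyk
      obtain ⟨p, hxp⟩ := mem_iUnion.1 hx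
      exact hAg p.1 p.2 x hxp hyj hyk
  choose Gp hGpo hGpz hGp using pair
  choose Gt hGto hGtz hGt using triple
  -- a basis of neighbourhoods meeting only finitely many closures of V's
  have hB : ∀ q : M, ∃ B : Set M, IsOpen B ∧ q ∈ B ∧
      {i : I | (closure (D.V i) ∩ B).Nonempty}.Finite := by
    intro q
    obtain ⟨s, hs, hfin⟩ := D.locallyFinite_V.closure q
    obtain ⟨B, hBs, hBo, hqB⟩ := mem_nhds_iff.mp hs
    exact ⟨B, hBo, hqB, hfin.subset fun i hi =>
      hi.mono (inter_subset_inter_right _ hBs)⟩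
  choose B hBo hqB hBfin using hB
  set F : M → Set I := fun q => {i : I | (closure (D.V i) ∩ B q).Nonempty} with hF
  -- the tube T
  set Tq : M → Set (M × ComplexN n) := fun q =>
    ((B q ×ˢ Metric.ball (0 : ComplexN n) 1) ∩
      ⋂ i ∈ F q, ⋂ j ∈ F q, (Gp i j ∪ ((closure (D.V i) ∩ closure (D.V j))ᶜ ×ˢ univ))) ∩
      ⋂ i ∈ F q, ⋂ j ∈ F q, ⋂ k ∈ F q,
        (Gt i j k ∪ (((closure (D.V i) ∩ closure (D.V j)) ∩ closure (D.V k))ᶜ ×ˢ univ)) with hTq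
  have hTqo : ∀ q, IsOpen (Tq q) := by
    intro q
    refine (((hBo q).prod Metric.isOpen_ball).inter ((hBfin q).isOpen_biInter fun i _ =>
      (hBfin q).isOpen_biInter fun j _ => (hGpo i j).union
        ((((isClosed_closure.inter isClosed_closure)).isOpen_compl).prod isOpen_univ))).inter
      ((hBfin q).isOpen_biInter fun i _ => (hBfin q).isOpen_biInter fun j _ =>
        (hBfin q).isOpen_biInter fun k _ => (hGto i j k).union
          (((((isClosed_closure.inter isClosed_closure).inter
            isClosed_closure)).isOpen_compl).prod isOpen_univ))
  have hTqm : ∀ q, (q, (0 : ComplexN n)) ∈ Tq q := by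
    intro q
    refine ⟨⟨⟨hqB q, by simp⟩, ?_⟩, ?_⟩
    · refine mem_iInter₂.2 fun i _ => mem_iInter₂.2 fun j _ => ?_
      by_cases hq : q ∈ closure (D.V i) ∩ closure (D.V j)
      · exact Or.inl (hGpz i j ⟨hq, rfl⟩)
      · exact Or.inr ⟨hq, trivial⟩
    · refine mem_iInter₂.2 fun i _ => mem_iInter₂.2 fun j _ => mem_iInter₂.2 fun k _ => ?_
      by_cases hq : q ∈ (closure (D.V i) ∩ closure (D.V j)) ∩ closure (D.V k)
      · exact Or.inl (hGtz i j k ⟨hq, rfl⟩)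
      · exact Or.inr ⟨hq, trivial⟩
  set T : Set (M × ComplexN n) := ⋃ q : M, Tq q with hT
  have hTo : IsOpen T := isOpen_iUnion hTqo
  have hT0 : ∀ q : M, (q, (0 : ComplexN n)) ∈ T := fun q => mem_iUnion.2 ⟨q, hTqm q⟩
  have hTball : T ⊆ univ ×ˢ Metric.ball (0 : ComplexN n) 1 := by
    intro x hx
    obtain ⟨q, hxq⟩ := mem_iUnion.1 hx
    exact ⟨trivial, hxq.1.1.2⟩
  have hTGp : ∀ x ∈ T, ∀ i j : I, x.1 ∈ closure (D.V i) → x.1 ∈ closure (D.V j) →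
      x ∈ Gp i j := by
    intro x hx i j hxi hxj
    obtain ⟨q, hxq⟩ := mem_iUnion.1 hx
    have hxB : x.1 ∈ B q := hxq.1.1.1
    have hi : i ∈ F q := ⟨x.1, hxi, hxB⟩
    have hj : j ∈ F q := ⟨x.1, hxj, hxB⟩
    have := mem_iInter₂.1 (mem_iInter₂.1 hxq.1.2 i hi) j hj
    rcases this with h | h
    · exact h
    · exact absurd ⟨hxi, hxj⟩ h.1
  have hTGt : ∀ x ∈ T, ∀ i j k : I, x.1 ∈ closure (D.V i) → x.1 ∈ closure (D.V j) →
      x.1 ∈ closure (D.V k) → x ∈ Gt i j k := by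
    intro x hx i j k hxi hxj hxk
    obtain ⟨q, hxq⟩ := mem_iUnion.1 hx
    have hxB : x.1 ∈ B q := hxq.1.1.1
    have hi : i ∈ F q := ⟨x.1, hxi, hxB⟩
    have hj : j ∈ F q := ⟨x.1, hxj, hxB⟩
    have hk : k ∈ F q := ⟨x.1, hxk, hxB⟩
    have := mem_iInter₂.1 (mem_iInter₂.1 (mem_iInter₂.1 hxq.2 i hi) j hj) k hk
    rcases this with h | h
    · exact h
    · exact absurd ⟨⟨hxi, hxj⟩, hxk⟩ h.1
  -- the sets Q
  set Q : I → Set (M × ComplexN n) := fun i => (D.U i ×ˢ (univ : Set (ComplexN n))) ∩ T with hQ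
  have hQopen : ∀ i, IsOpen (Q i) := fun i => ((D.isOpen_U i).prod isOpen_univ).inter hTo
  have hQU : ∀ i, Q i ⊆ D.U i ×ˢ univ := fun i x hx => hx.1
  have hQT : ∀ i, Q i ⊆ T := fun i x hx => hx.2
  have hQcl : ∀ i, closure (Q i) ⊆ closure (D.U i) ×ˢ Metric.closedBall (0 : ComplexN n) 1 := by
    intro i
    have hsub : Q i ⊆ D.U i ×ˢ Metric.ball (0 : ComplexN n) 1 :=
      fun x hx => ⟨hx.1.1, (hTball hx.2).2⟩
    refine (closure_mono hsub).trans ?_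
    rw [closure_prod_eq]
    exact prod_mono Subset.rfl Metric.closure_ball_subset_closedBall
  have hQcomp : ∀ i, IsCompact (closure (Q i)) := by
    intro i
    exact ((D.U_compactClosure i).prod (isCompact_closedBall _ _)).of_isClosed_subset
      isClosed_closure (hQcl i)
  refine ⟨Q, hQopen, fun i x hx => ⟨hUV i hx.1.1, trivial⟩, ?_, ?_, ?_, ?_, ?_⟩
  · -- CondA
    intro i
    exact ⟨hQcomp i, fun x hx => ⟨D.closure_U_subset i (hQcl i hx).1, trivial⟩⟩
  · -- CondB
    intro i
    constructor
    · rintro ⟨x1, x2⟩ ⟨hx1, hx2⟩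
      have hx2' : x2 = 0 := hx2
      subst hx2'
      exact ⟨⟨hx1, trivial⟩, hT0 x1⟩
    · exact hQU i
  · -- CondC
    intro i j
    have hsub1 : D.Qij Q i j ⊆ Q i := fun x hx => hx.1.1
    have hsubG : D.Qij Q i j ⊆ Gp i j := by
      intro x hx
      have hx1 : x.1 ∈ D.V i ∩ D.V j := hx.1.2.1.1.1
      exact hTGp x (hQT i (hsub1 hx)) i j (subset_closure hx1.1) (subset_closure hx1.2)
    have hU1 : D.Qij Q i j ⊆ D.U i ×ˢ univ := fun x hx => (hsub1 hx).1
    have hU2 : D.Qij Q i j ⊆ D.φ i j ⁻¹' (D.U j ×ˢ univ) := fun x hx => ⟨hx.2.1.1, trivial⟩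
    have hcl := hGp i j _ hsubG hU1 hU2
    exact ⟨(hQcomp i).of_isClosed_subset isClosed_closure (closure_mono hsub1), hcl⟩
  · -- CondD
    intro i j k x hx
    obtain ⟨hxij, hxik⟩ := hx
    have hxT : x ∈ T := hQT i hxij.1.1
    have h1 : x.1 ∈ D.V i ∩ D.V j := hxij.1.2.1.1.1
    have h2 : x.1 ∈ D.V i ∩ D.V k := hxik.1.2.1.1.1
    have hxG : x ∈ Gt i j k := hTGt x hxT i j k (subset_closure h1.1)
      (subset_closure h1.2) (subset_closure h2.2)
    have hyj : D.φ i j x ∈ D.U j ×ˢ univ := ⟨hxij.2.1.1, trivial⟩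
    have hyk : D.φ i k x ∈ D.U k ×ˢ univ := ⟨hxik.2.1.1, trivial⟩
    exact (hGt i j k x hxG hyj hyk).1
  · -- CondE
    intro i j k x hx
    obtain ⟨hxij, hxik⟩ := hx
    have hxT : x ∈ T := hQT i hxij.1.1
    have h1 : x.1 ∈ D.V i ∩ D.V j := hxij.1.2.1.1.1
    have h2 : x.1 ∈ D.V i ∩ D.V k := hxik.1.2.1.1.1
    have hxG : x ∈ Gt i j k := hTGt x hxT i j k (subset_closure h1.1)
      (subset_closure h1.2) (subset_closure h2.2)
    have hyj : D.φ i j x ∈ D.U j ×ˢ univ := ⟨hxij.2.1.1, trivial⟩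
    have hyk : D.φ i k x ∈ D.U k ×ˢ univ := ⟨hxik.2.1.1, trivial⟩
    exact (hGt i j k x hxG hyj hyk).2
end

section
/- With the gluing data as in the context, let {Q_i : i ∈ I} be open subsets Q_i ⊆ O_i satisfying conditions (a), (b), (c), (d), (e) for all i, j, k ∈ I. Let X be the disjoint union of the Q_i, let R be the equivalence relation on X generated by (i,x) ~ (j, φ_ij(x)) for x ∈ Q_ij, and let M' = X/R be the quotient topological space. Then: (1) M' is Hausdorff; (2) for each i ∈ I, the composite map Q_i → X → M' is an open topological embedding; (3) the map j : M → M' sending x ∈ M to the class of (i, (x,0)) for any i ∈ I with x ∈ U_i is well-defined (independent of the choice of i) and is a closed topological embedding of M into M'. -/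
open Set Topology

/-! The generating relation `(i, x) ~ (j, φᵢⱼ x)`, `x ∈ Qᵢⱼ`, is already an equivalence relation:
reflexive as `φᵢᵢ = id`, symmetric as `φⱼᵢ = φᵢⱼ⁻¹`, transitive by (d) and (e). Hence two points
of `X` have the same image in `M'` iff they are related. The saturation of an open `A ⊆ Qᵢ` meets
`Qⱼ` in the open set `Qⱼᵢ ∩ φⱼᵢ⁻¹(A)`, so `Qᵢ → M'` is an open map, injective as `φᵢᵢ = id`.
For Hausdorffness, a point `x ∈ Qᵢ` outside the closure of `Qᵢⱼ` is separated from all of `Qⱼ`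
by the complement of that closure; a point inside lies in `Oᵢⱼ` by (c), where `φᵢⱼ` is
continuous, so a separation of `φᵢⱼ x` from `y` in `M × ℂⁿ` pulls back. Since `φ` fixes the
zero section, `(i, (x, 0))` is related exactly to the points `(k, (x, 0))`; this makes
`x ↦ [(i, (x, 0))]` well defined and injective, and the preimage of the image of a closed `C` in
each `Qₖ` is the closed set `Qₖ ∩ (C × {0})`. -/

section SigmaQuot

variable {ι : Type*} {X : ι → Type*} [∀ i, TopologicalSpace (X i)] {r : Sigma X → Sigma X → Prop}

theorem isOpenMap_quot_mk_sigmaMk (hr : Equivalence r)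
    (hsat : ∀ i j (s : Set (X i)), IsOpen s → IsOpen {y : X j | ∃ x ∈ s, r ⟨i, x⟩ ⟨j, y⟩})
    (i : ι) : IsOpenMap fun x : X i => Quot.mk r ⟨i, x⟩ := by
  intro s hs
  rw [← isQuotientMap_quot_mk.isOpen_preimage, isOpen_sigma_iff]
  intro j
  convert hsat i j s hs using 1
  ext y
  simp [hr.quot_mk_eq_iff]

theorem isOpenEmbedding_quot_mk_sigmaMk (hr : Equivalence r)
    (hsat : ∀ i j (s : Set (X i)), IsOpen s → IsOpen {y : X j | ∃ x ∈ s, r ⟨i, x⟩ ⟨j, y⟩})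
    (hinj : ∀ i (x y : X i), r ⟨i, x⟩ ⟨i, y⟩ → x = y) (i : ι) :
    IsOpenEmbedding fun x : X i => Quot.mk r ⟨i, x⟩ :=
  .of_continuous_injective_isOpenMap (continuous_quot_mk.comp continuous_sigmaMk)
    (fun x y hxy => hinj i x y ((hr.quot_mk_eq_iff _ _).mp hxy))
    (isOpenMap_quot_mk_sigmaMk hr hsat i)

theorem t2Space_quot_sigma (hr : Equivalence r)
    (hsat : ∀ i j (s : Set (X i)), IsOpen s → IsOpen {y : X j | ∃ x ∈ s, r ⟨i, x⟩ ⟨j, y⟩})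
    (hsep : ∀ i j (x : X i) (y : X j), ¬ r ⟨i, x⟩ ⟨j, y⟩ →
      ∃ s ∈ 𝓝 x, ∃ t ∈ 𝓝 y, ∀ a ∈ s, ∀ b ∈ t, ¬ r ⟨i, a⟩ ⟨j, b⟩) :
    T2Space (Quot r) := by
  refine t2Space_iff_disjoint_nhds.mpr fun p q hpq => ?_
  obtain ⟨⟨i, x⟩, rfl⟩ := Quot.exists_rep p
  obtain ⟨⟨j, y⟩, rfl⟩ := Quot.exists_rep q
  obtain ⟨s, hs, t, ht, hst⟩ := hsep i j x y fun h => hpq (Quot.sound h)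
  refine Filter.disjoint_of_disjoint_of_mem ?_
    ((isOpenMap_quot_mk_sigmaMk hr hsat i).image_mem_nhds hs)
    ((isOpenMap_quot_mk_sigmaMk hr hsat j).image_mem_nhds ht)
  rw [disjoint_left]
  rintro _ ⟨a, ha, rfl⟩ ⟨b, hb, hab⟩
  exact hst a ha b hb ((hr.quot_mk_eq_iff _ _).mp hab.symm)

end SigmaQuot

namespace GluingData

variable {M : Type*} [TopologicalSpace M] {n : ℕ} {I : Type*} (D : GluingData M n I)
  {Q : I → Set (M × ComplexN n)}

def rel (Q : I → Set (M × ComplexN n)) (a b : Σ i, Q i) : Prop :=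
  (a.2 : M × ComplexN n) ∈ D.Qij Q a.1 b.1 ∧ (b.2 : M × ComplexN n) = D.φ a.1 b.1 a.2

theorem V_subset_W (i : I) : D.V i ⊆ D.W i := subset_closure.trans (D.closure_V_subset i)

theorem isOpen_Oij (i j : I) : IsOpen (D.Oij i j) := by
  have hV : IsOpen ((D.V i ∩ D.V j) ×ˢ (univ : Set (ComplexN n))) :=
    ((D.isOpen_V i).inter (D.isOpen_V j)).prod isOpen_univ
  exact ((D.continuousOn_φ i j).mono inter_subset_right).isOpen_inter_preimage
    (hV.inter (D.isOpen_N i j)) hV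

theorem Qij_subset_N (i j : I) : D.Qij Q i j ⊆ D.N i j := fun _ h => h.1.2.1.2

theorem isOpen_Qij (hQ : ∀ i, IsOpen (Q i)) (i j : I) : IsOpen (D.Qij Q i j) :=
  ((D.continuousOn_φ i j).mono fun _ h => h.2.1.2).isOpen_inter_preimage
    ((hQ i).inter (D.isOpen_Oij i j)) (hQ j)

theorem rel_refl (hQO : ∀ i, Q i ⊆ D.O i) (a : Σ i, Q i) : D.rel Q a a := by
  obtain ⟨i, z, hz⟩ := a
  have hV : z.1 ∈ D.V i := (hQO i hz).1
  have hN : z ∈ D.N i i := by rw [D.N_self]; exact ⟨D.V_subset_W i hV, trivial⟩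
  have hφ : D.φ i i z = z := D.φ_self i z hN
  refine ⟨⟨⟨hz, ⟨⟨⟨hV, hV⟩, trivial⟩, hN⟩, ?_⟩, ?_⟩, hφ.symm⟩
  · rw [mem_preimage, hφ]; exact ⟨⟨hV, hV⟩, trivial⟩
  · rw [mem_preimage, hφ]; exact hz

theorem rel_symm {a b : Σ i, Q i} (h : D.rel Q a b) : D.rel Q b a := by
  obtain ⟨i, x, hx⟩ := a
  obtain ⟨j, y, hy⟩ := b
  obtain ⟨⟨⟨-, ⟨hV, hN⟩, hφV⟩, -⟩, rfl : y = D.φ i j x⟩ := h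
  have hinv : D.φ j i (D.φ i j x) = x := D.φ_leftInv i j x hN
  refine ⟨⟨⟨hy, ⟨⟨⟨hφV.1.2, hφV.1.1⟩, trivial⟩, ?_⟩, ?_⟩, ?_⟩, hinv.symm⟩
  · rw [← D.φ_image i j]; exact mem_image_of_mem _ hN
  · rw [mem_preimage, hinv]; exact ⟨⟨hV.1.2, hV.1.1⟩, trivial⟩
  · rw [mem_preimage, hinv]; exact hx

theorem rel_trans (hd : D.CondD Q) (he : D.CondE Q) {a b c : Σ i, Q i}
    (hab : D.rel Q a b) (hbc : D.rel Q b c) : D.rel Q a c := by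
  obtain ⟨hb, ha⟩ := D.rel_symm hab
  have hφ : D.φ a.1 c.1 a.2 = c.2 := by rw [ha, he b.1 a.1 c.1 _ ⟨hb, hbc.1⟩, hbc.2]
  refine ⟨⟨⟨a.2.2, ?_⟩, ?_⟩, hφ.symm⟩
  · rw [ha]; exact hd b.1 a.1 c.1 ⟨hb, hbc.1⟩
  · rw [mem_preimage, hφ]; exact c.2.2

theorem equivalence_rel (hQO : ∀ i, Q i ⊆ D.O i) (hd : D.CondD Q) (he : D.CondE Q) :
    Equivalence (D.rel Q) :=
  ⟨D.rel_refl hQO, D.rel_symm, D.rel_trans hd he⟩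

theorem eq_of_rel_mk_mk {i : I} {x y : Q i} (h : D.rel Q ⟨i, x⟩ ⟨i, y⟩) : x = y :=
  Subtype.ext (h.2.trans (D.φ_self i x (D.Qij_subset_N i i h.1))).symm

theorem isOpen_setOf_exists_rel (hQ : ∀ i, IsOpen (Q i)) (i j : I) (s : Set (Q i))
    (hs : IsOpen s) : IsOpen {y : Q j | ∃ x ∈ s, D.rel Q ⟨i, x⟩ ⟨j, y⟩} := by
  obtain ⟨A, hA, rfl⟩ := isOpen_induced_iff.mp hs
  have hsat : {y : Q j | ∃ x ∈ Subtype.val ⁻¹' A, D.rel Q ⟨i, x⟩ ⟨j, y⟩} =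
      Subtype.val ⁻¹' (D.Qij Q j i ∩ D.φ j i ⁻¹' A) := by
    ext y
    constructor
    · rintro ⟨x, hx, hxy⟩
      obtain ⟨hy, hyx⟩ := D.rel_symm hxy
      exact ⟨hy, by rw [mem_preimage, ← hyx]; exact hx⟩
    · rintro ⟨hy, hyA⟩
      exact ⟨⟨D.φ j i y, hy.2⟩, hyA, D.rel_symm (a := ⟨j, y⟩) ⟨hy, rfl⟩⟩
  rw [hsat]
  exact (((D.continuousOn_φ j i).mono (D.Qij_subset_N j i)).isOpen_inter_preimage
    (D.isOpen_Qij hQ j i) hA).preimage continuous_subtype_val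

theorem exists_mem_nhds_not_rel [T2Space M] (hc : D.CondC Q) {i j : I} (x : Q i) (y : Q j)
    (hxy : ¬ D.rel Q ⟨i, x⟩ ⟨j, y⟩) :
    ∃ s ∈ 𝓝 x, ∃ t ∈ 𝓝 y, ∀ a ∈ s, ∀ b ∈ t, ¬ D.rel Q ⟨i, a⟩ ⟨j, b⟩ := by
  suffices ∃ A ∈ 𝓝 (x : M × ComplexN n), ∃ B ∈ 𝓝 (y : M × ComplexN n),
      ∀ z ∈ A, z ∈ D.Qij Q i j → D.φ i j z ∉ B by
    obtain ⟨A, hA, B, hB, hAB⟩ := this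
    exact ⟨_, continuous_subtype_val.continuousAt.preimage_mem_nhds hA,
      _, continuous_subtype_val.continuousAt.preimage_mem_nhds hB,
      fun a ha b hb hab => hAB a ha hab.1 (hab.2 ▸ hb)⟩
  by_cases hx : (x : M × ComplexN n) ∈ closure (D.Qij Q i j)
  · have hxO := (hc i j).2 hx
    have hne : (y : M × ComplexN n) ≠ D.φ i j x := fun h =>
      hxy ⟨⟨⟨x.2, hxO⟩, by rw [mem_preimage, ← h]; exact y.2⟩, h⟩
    obtain ⟨B, B', hB, hB', hBB'⟩ := t2_separation_nhds hne
    exact ⟨_, ((D.continuousOn_φ i j).continuousAt ((D.isOpen_N i j).mem_nhds hxO.1.2)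
      ).preimage_mem_nhds hB', B, hB, fun z hz _ hzB => disjoint_left.mp hBB' hzB hz⟩
  · exact ⟨_, isClosed_closure.isOpen_compl.mem_nhds hx, univ, Filter.univ_mem,
      fun z hz hzQ _ => hz (subset_closure hzQ)⟩

theorem rel_zeroSection_iff (hQO : ∀ i, Q i ⊆ D.O i) {i k : I} {x : M}
    (hx : ((x, 0) : M × ComplexN n) ∈ Q i) (z : Q k) :
    D.rel Q ⟨i, ⟨(x, 0), hx⟩⟩ ⟨k, z⟩ ↔ (z : M × ComplexN n) = (x, 0) := by
  constructor
  · rintro ⟨hq, hz⟩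
    rw [hz, D.φ_id_zeroSection i k _ ⟨(D.N_subset i k (D.Qij_subset_N i k hq)).1, rfl⟩]
  · intro hz
    have hVi : x ∈ D.V i := (hQO i hx).1
    have hVk : x ∈ D.V k := (hQO k (hz ▸ z.2)).1
    have hW : ((x, 0) : M × ComplexN n) ∈ (D.W i ∩ D.W k) ×ˢ {0} :=
      ⟨⟨D.V_subset_W i hVi, D.V_subset_W k hVk⟩, rfl⟩
    have hφ := D.φ_id_zeroSection i k _ hW
    refine ⟨⟨⟨hx, ⟨⟨⟨hVi, hVk⟩, trivial⟩, D.zeroSection_subset_N i k hW⟩, ?_⟩, ?_⟩,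
      hz.trans hφ.symm⟩
    · rw [mem_preimage, hφ]; exact ⟨⟨hVi, hVk⟩, trivial⟩
    · rw [mem_preimage, hφ, ← hz]; exact z.2

theorem exists_mem_U (x : M) : ∃ i, x ∈ D.U i := iUnion_eq_univ_iff.mp D.cover_U x

noncomputable def zeroSection (hb : D.CondB Q) (x : M) : Quot (D.rel Q) :=
  Quot.mk _ ⟨(D.exists_mem_U x).choose, ⟨(x, 0), (hb _).1 ⟨(D.exists_mem_U x).choose_spec, rfl⟩⟩⟩

theorem zeroSection_eq_mk (hQO : ∀ i, Q i ⊆ D.O i) (hb : D.CondB Q) {i : I} {x : M}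
    (hx : ((x, 0) : M × ComplexN n) ∈ Q i) :
    D.zeroSection hb x = Quot.mk _ ⟨i, ⟨(x, 0), hx⟩⟩ :=
  Quot.sound ((D.rel_zeroSection_iff hQO _ _).mpr rfl)

theorem zeroSection_eq_mk_iff (hQO : ∀ i, Q i ⊆ D.O i) (hd : D.CondD Q) (he : D.CondE Q)
    (hb : D.CondB Q) {k : I} {x : M} (z : Q k) :
    D.zeroSection hb x = Quot.mk _ ⟨k, z⟩ ↔ (z : M × ComplexN n) = (x, 0) :=
  ((D.equivalence_rel hQO hd he).quot_mk_eq_iff _ _).trans (D.rel_zeroSection_iff hQO _ z)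

theorem continuous_zeroSection (hQO : ∀ i, Q i ⊆ D.O i) (hb : D.CondB Q) :
    Continuous (D.zeroSection hb) := by
  refine continuous_iff_continuousAt.mpr fun x => ?_
  obtain ⟨i, hi⟩ := D.exists_mem_U x
  refine (continuousOn_iff_continuous_domRestrict.mpr ?_).continuousAt ((D.isOpen_U i).mem_nhds hi)
  have hres : (D.U i).domRestrict (D.zeroSection hb) =
      (fun z : Q i => Quot.mk (D.rel Q) ⟨i, z⟩) ∘
        fun u : D.U i => ⟨((u : M), 0), (hb i).1 ⟨u.2, rfl⟩⟩ :=
    funext fun u => D.zeroSection_eq_mk hQO hb _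
  rw [hres]
  exact (continuous_quot_mk.comp continuous_sigmaMk).comp
    ((continuous_subtype_val.prodMk continuous_const).subtype_mk _)

theorem isClosedMap_zeroSection (hQO : ∀ i, Q i ⊆ D.O i) (hd : D.CondD Q) (he : D.CondE Q)
    (hb : D.CondB Q) : IsClosedMap (D.zeroSection hb) := by
  intro C hC
  rw [← isQuotientMap_quot_mk.isClosed_preimage, isClosed_sigma_iff]
  intro k
  have hpre : Sigma.mk k ⁻¹' (Quot.mk _ ⁻¹' (D.zeroSection hb '' C)) =
      Subtype.val ⁻¹' (C ×ˢ {0}) := by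
    ext z
    simp only [mem_preimage, mem_image, D.zeroSection_eq_mk_iff hQO hd he hb]
    constructor
    · rintro ⟨x, hx, hz⟩
      rw [hz]
      exact ⟨hx, rfl⟩
    · rintro ⟨hzC, hz0⟩
      exact ⟨_, hzC, Prod.ext rfl hz0⟩
  rw [hpre]
  exact (hC.prod isClosed_singleton).preimage continuous_subtype_val

theorem zeroSection_injective (hQO : ∀ i, Q i ⊆ D.O i) (hd : D.CondD Q) (he : D.CondE Q)
    (hb : D.CondB Q) : Function.Injective (D.zeroSection hb) := fun _ _ h =>
  congrArg Prod.fst ((D.zeroSection_eq_mk_iff hQO hd he hb _).mp h).symm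

theorem isClosedEmbedding_zeroSection (hQO : ∀ i, Q i ⊆ D.O i) (hd : D.CondD Q)
    (he : D.CondE Q) (hb : D.CondB Q) : IsClosedEmbedding (D.zeroSection hb) :=
  .of_continuous_injective_isClosedMap (D.continuous_zeroSection hQO hb)
    (D.zeroSection_injective hQO hd he hb) (D.isClosedMap_zeroSection hQO hd he hb)

end GluingData

theorem quotient_hausdorff_openEmbedding_closedEmbedding_general {M : Type*} [TopologicalSpace M]
    [T2Space M] {n : ℕ} {I : Type*}
    (D : GluingData M n I) (Q : I → Set (M × ComplexN n))
    (hQopen : ∀ i, IsOpen (Q i)) (hQsub : ∀ i, Q i ⊆ D.O i)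
    (hb : D.CondB Q) (hc : D.CondC Q) (hd : D.CondD Q) (he : D.CondE Q)
    (R₀ : (Σ i : I, ↥(Q i)) → (Σ i : I, ↥(Q i)) → Prop)
    (hR₀ : ∀ a b, R₀ a b ↔
      ∃ _ : (a.2 : M × ComplexN n) ∈ D.Qij Q a.1 b.1,
        (b.2 : M × ComplexN n) = D.φ a.1 b.1 a.2) :
    T2Space (Quot R₀) ∧
    (∀ i : I, IsOpenEmbedding (fun x : ↥(Q i) => Quot.mk R₀ ⟨i, x⟩)) ∧
    ∃ j : M → Quot R₀,
      (∀ (i : I) (x : M) (_ : x ∈ D.U i) (hmem : ((x, 0) : M × ComplexN n) ∈ Q i),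
        j x = Quot.mk R₀ ⟨i, ⟨(x, 0), hmem⟩⟩) ∧
      IsClosedEmbedding j := by
  obtain rfl : R₀ = D.rel Q := by
    funext a b
    exact propext ((hR₀ a b).trans exists_prop)
  have hr := D.equivalence_rel hQsub hd he
  have hsat := D.isOpen_setOf_exists_rel hQopen
  exact ⟨t2Space_quot_sigma hr hsat fun _ _ => D.exists_mem_nhds_not_rel hc,
    isOpenEmbedding_quot_mk_sigmaMk hr hsat fun _ _ _ => D.eq_of_rel_mk_mk,
    D.zeroSection hb, fun _ _ _ hmem => D.zeroSection_eq_mk hQsub hb hmem,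
    D.isClosedEmbedding_zeroSection hQsub hd he hb⟩

/-- With the gluing data as in the context, let `Qᵢ ⊆ Oᵢ` be open subsets satisfying conditions
(a)–(e).  Let `X` be the topological sum of the `Qᵢ`, let `R₀` be the relation
`(i,x) ~ (j, φᵢⱼ(x))` for `x ∈ Qᵢⱼ`, and let `M' = X / ∼` be the quotient by the equivalence
relation generated by `R₀`.  Then `M'` is Hausdorff, each `Qᵢ → M'` is an open embedding, and
the canonical map `M → M'`, `x ↦ [(i, (x,0))]` for any `i` with `x ∈ Uᵢ`, is well defined and a
closed embedding. -/
theorem quotient_hausdorff_openEmbedding_closedEmbedding {M : Type*} [TopologicalSpace M]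
    [T2Space M] [LocallyCompactSpace M] [FirstCountableTopology M] {n : ℕ} {I : Type*}
    (D : GluingData M n I) (Q : I → Set (M × ComplexN n))
    (hQopen : ∀ i, IsOpen (Q i)) (hQsub : ∀ i, Q i ⊆ D.O i)
    (ha : D.CondA Q) (hb : D.CondB Q) (hc : D.CondC Q) (hd : D.CondD Q) (he : D.CondE Q)
    (R₀ : (Σ i : I, ↥(Q i)) → (Σ i : I, ↥(Q i)) → Prop)
    (hR₀ : ∀ a b, R₀ a b ↔
      ∃ _ : (a.2 : M × ComplexN n) ∈ D.Qij Q a.1 b.1,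
        (b.2 : M × ComplexN n) = D.φ a.1 b.1 a.2) :
    T2Space (Quot R₀) ∧
    (∀ i : I, IsOpenEmbedding (fun x : ↥(Q i) => Quot.mk R₀ ⟨i, x⟩)) ∧
    ∃ j : M → Quot R₀,
      (∀ (i : I) (x : M) (_ : x ∈ D.U i) (hmem : ((x, 0) : M × ComplexN n) ∈ Q i),
        j x = Quot.mk R₀ ⟨i, ⟨(x, 0), hmem⟩⟩) ∧
      IsClosedEmbedding j :=
  quotient_hausdorff_openEmbedding_closedEmbedding_general D Q hQopen hQsub hb hc hd he R₀ hR₀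
end
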